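/- arXiv:1607.08711 — 7 statements merged into one kernel-verified Lean document; each statement's English description precedes it below -/
import Mathlib

section
/- Let (Y,μ) be a probability space, F : Y → Y measurable, Z ⊆ Y measurable, and let μ_Z be a probability measure on Z. Let σ : Z → ℕ be measurable with σ(z) ≥ 1 for all z and σ̄ := ∫_Z σ dμ_Z < ∞, and let τ : Y → (0,∞) be measurable. Define τ_ℓ(z) = Σ_{j=0}^{ℓ−1} τ(F^j z) for ℓ ≥ 0. Assume the Kac-type relation: ∫_Y h dμ = σ̄^{−1} ∫_Z Σ_{ℓ=0}^{σ(z)−1} h(F^ℓ z) dμ_Z(z) for every measurable h : Y → [0,∞]. Then for every measurable g : Y × ℝ → [0,∞], ∫_Z Σ_{ℓ=0}^{σ(z)−1} ∫_{τ_ℓ(z)}^{τ_{ℓ+1}(z)} g(F^ℓ z, u − τ_ℓ(z)) du dμ_Z(z) = σ̄ ∫_Y ∫_0^{τ(y)} g(y,u) du dμ(y). -/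
open MeasureTheory
open scoped ENNReal

lemma shift_lintegral (f : ℝ → ℝ≥0∞) (hf : Measurable f) (a b : ℝ) :
    ∫⁻ u in Set.Ioc a b, f (u - a) = ∫⁻ u in Set.Ioc 0 (b - a), f u := by
  have hpre : (fun u : ℝ => u + a) ⁻¹' Set.Ioc a b = Set.Ioc 0 (b - a) := by
    ext x
    simp only [Set.mem_preimage, Set.mem_Ioc]
    constructor <;> rintro ⟨h1, h2⟩ <;> constructor <;> linarith
  calc ∫⁻ u in Set.Ioc a b, f (u - a)
      = ∫⁻ u in Set.Ioc a b, f (u - a) ∂(Measure.map (· + a) volume) := by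
        rw [MeasureTheory.map_add_right_eq_self volume a]
    _ = ∫⁻ x in (fun u : ℝ => u + a) ⁻¹' Set.Ioc a b, f ((x + a) - a) :=
        setLIntegral_map measurableSet_Ioc (hf.comp (measurable_id.sub_const a))
          (measurable_id.add_const a)
    _ = ∫⁻ x in Set.Ioc 0 (b - a), f x := by
        rw [hpre]; simp

theorem stmt1 {Y : Type*} [MeasurableSpace Y]
    (μ ν : Measure Y) [IsProbabilityMeasure μ] [IsProbabilityMeasure ν]
    (F : Y → Y) (hF : Measurable F)
    (Z : Set Y) (hZ : MeasurableSet Z) (hνZ : ν Z = 1)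
    (σ : Y → ℕ) (hσmeas : Measurable σ) (hσ1 : ∀ z ∈ Z, 1 ≤ σ z)
    (τ : Y → ℝ) (hτmeas : Measurable τ) (hτpos : ∀ y, 0 < τ y)
    (σbar : ℝ≥0∞) (hσbar : σbar = ∫⁻ z in Z, (σ z : ℝ≥0∞) ∂ν)
    (hfin : σbar ≠ ⊤)
    (hKac : ∀ h : Y → ℝ≥0∞, Measurable h →
      ∫⁻ y, h y ∂μ =
        σbar⁻¹ * ∫⁻ z in Z, (∑ ℓ ∈ Finset.range (σ z), h (F^[ℓ] z)) ∂ν)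
    (g : Y → ℝ → ℝ≥0∞) (hg : Measurable (Function.uncurry g)) :
    (∫⁻ z in Z, (∑ ℓ ∈ Finset.range (σ z),
        ∫⁻ u in Set.Ioc (∑ j ∈ Finset.range ℓ, τ (F^[j] z))
            (∑ j ∈ Finset.range (ℓ + 1), τ (F^[j] z)),
          g (F^[ℓ] z) (u - ∑ j ∈ Finset.range ℓ, τ (F^[j] z))) ∂ν)
      = σbar * ∫⁻ y, (∫⁻ u in Set.Ioc (0:ℝ) (τ y), g y u) ∂μ := by
  set h : Y → ℝ≥0∞ := fun y => ∫⁻ u in Set.Ioc (0:ℝ) (τ y), g y u with hh_def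
  -- measurability of h
  have hset : MeasurableSet {p : Y × ℝ | 0 < p.2 ∧ p.2 ≤ τ p.1} := by
    apply MeasurableSet.inter
    · exact measurableSet_lt measurable_const measurable_snd
    · exact measurableSet_le measurable_snd (hτmeas.comp measurable_fst)
  have hind : Measurable (fun p : Y × ℝ =>
      ({p : Y × ℝ | 0 < p.2 ∧ p.2 ≤ τ p.1}).indicator (Function.uncurry g) p) :=
    hg.indicator hset
  have hh : Measurable h := by
    have heq : ∀ y, h y = ∫⁻ u,
        ({p : Y × ℝ | 0 < p.2 ∧ p.2 ≤ τ p.1}).indicator (Function.uncurry g) (y, u) := by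
      intro y
      rw [hh_def]
      simp only
      rw [← lintegral_indicator measurableSet_Ioc (g y)]
      refine lintegral_congr fun u => ?_
      simp only [Set.indicator_apply, Set.mem_Ioc, Set.mem_setOf_eq, Function.uncurry]
    rw [show h = fun y => ∫⁻ u,
        ({p : Y × ℝ | 0 < p.2 ∧ p.2 ≤ τ p.1}).indicator (Function.uncurry g) (y, u)
      from funext heq]
    exact Measurable.lintegral_prod_right' hind
  -- pointwise identification of the inner integrals
  have hterm : ∀ z, ∀ ℓ : ℕ,
      (∫⁻ u in Set.Ioc (∑ j ∈ Finset.range ℓ, τ (F^[j] z))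
          (∑ j ∈ Finset.range (ℓ + 1), τ (F^[j] z)),
        g (F^[ℓ] z) (u - ∑ j ∈ Finset.range ℓ, τ (F^[j] z))) = h (F^[ℓ] z) := by
    intro z ℓ
    have hmg : Measurable (g (F^[ℓ] z)) := by
      have := hg.comp (measurable_prodMk_left (x := F^[ℓ] z))
      exact this
    rw [shift_lintegral _ hmg]
    have : (∑ j ∈ Finset.range (ℓ + 1), τ (F^[j] z)) -
        (∑ j ∈ Finset.range ℓ, τ (F^[j] z)) = τ (F^[ℓ] z) := by
      rw [Finset.sum_range_succ]; ring
    rw [this]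
  have hLHS : (∫⁻ z in Z, (∑ ℓ ∈ Finset.range (σ z),
        ∫⁻ u in Set.Ioc (∑ j ∈ Finset.range ℓ, τ (F^[j] z))
            (∑ j ∈ Finset.range (ℓ + 1), τ (F^[j] z)),
          g (F^[ℓ] z) (u - ∑ j ∈ Finset.range ℓ, τ (F^[j] z))) ∂ν)
      = ∫⁻ z in Z, (∑ ℓ ∈ Finset.range (σ z), h (F^[ℓ] z)) ∂ν := by
    congr 1
    funext z
    exact Finset.sum_congr rfl fun ℓ _ => hterm z ℓ
  rw [hLHS]
  -- σbar ≠ 0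
  have hσne : σbar ≠ 0 := by
    have h1 : (1 : ℝ≥0∞) ≤ σbar := by
      rw [hσbar]
      calc (1 : ℝ≥0∞) = ∫⁻ _ in Z, 1 ∂ν := by simp [hνZ]
        _ ≤ ∫⁻ z in Z, (σ z : ℝ≥0∞) ∂ν := by
            apply setLIntegral_mono' hZ
            intro z hz
            exact_mod_cast hσ1 z hz
    intro h0
    rw [h0] at h1
    simp at h1
  have key := hKac h hh
  rw [key, ← mul_assoc, ENNReal.mul_inv_cancel hσne hfin, one_mul]
end

section
/- Let β ∈ (1/2,1), q ∈ (1, 2β], c > 0, e₁ ∈ ℂ, K > 0, δ > 0, and set c_β = Γ(1−β) e^{iβπ/2}. Let λ : (0,δ] → ℂ satisfy |1 − λ(b) − c c_β b^{β} − e₁ b| ≤ K b^{q} for all b ∈ (0,δ]. Let J = ⌊(q−β)/(1−β)⌋, and define c_j = (−1)^j e₁^{j} / (c c_β)^{j+1} for 0 ≤ j ≤ J (so c₀ = (c c_β)^{−1}). Then there exist δ' ∈ (0,δ] and C > 0 such that λ(b) ≠ 1 for all b ∈ (0,δ'] and |(1 − λ(b))^{−1} − Σ_{j=0}^{J} c_j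 b^{−((j+1)β − j)}| ≤ C b^{−(2β−q)} for all b ∈ (0,δ']. -/
/-!
Write `1 - λ(b) = A + E + w` with `A = c c_β b^β`, `E = e₁ b` and `‖w‖ ≤ K b^q`. For small `b`,
`‖E‖ + ‖w‖ ≤ ‖A‖ / 2`, so `(A + E)⁻¹ = A⁻¹ ∑ (-E/A)^j` is a convergent geometric series; its
truncation after `J + 1` terms costs `O(‖A‖⁻¹ ‖E/A‖^(J+1)) = O(b^((1-β)(J+1) - β))`, and replacing
`(A + E)⁻¹` by `(A + E + w)⁻¹` costs `O(‖w‖ / ‖A‖²) = O(b^(q - 2β))`. The `j`-th term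
`A⁻¹ (-E/A)^j` is exactly `c_j b^(-((j+1)β - j))`, and `J` is chosen so that
`(1-β)(J+1) - β ≥ q - 2β`.
-/

open Real Finset Filter Topology

lemma half_norm_le_norm_add {E : Type*} [SeminormedAddCommGroup E] {x y : E}
    (h : ‖y‖ ≤ ‖x‖ / 2) : ‖x‖ / 2 ≤ ‖x + y‖ := by
  have := norm_sub_norm_le x (-y)
  rw [norm_neg, sub_neg_eq_add] at this
  linarith

lemma sum_inv_mul_neg_div_pow {F : Type*} [Field F] {A E : F} (hA : A ≠ 0) (hAE : A + E ≠ 0)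
    (n : ℕ) :
    ∑ j ∈ range n, A⁻¹ * (-E / A) ^ j = (A + E)⁻¹ - (A + E)⁻¹ * (-E / A) ^ n := by
  have hx : -E / A ≠ 1 := fun h => hAE (by rw [div_eq_one_iff_eq hA] at h; rw [← h]; ring)
  have hx1 : -E / A - 1 = -(A + E) / A := by field_simp; ring
  rw [← mul_sum, geom_sum_eq hx, hx1]
  field_simp
  ring

lemma norm_inv_add_add_sub_sum_le {𝕜 : Type*} [NormedField 𝕜] {A E w : 𝕜} (hA : A ≠ 0)
    (h : ‖E‖ + ‖w‖ ≤ ‖A‖ / 2) (n : ℕ) :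
    A + E + w ≠ 0 ∧
      ‖(A + E + w)⁻¹ - ∑ j ∈ range n, A⁻¹ * (-E / A) ^ j‖
        ≤ 4 * ‖w‖ / ‖A‖ ^ 2 + 2 / ‖A‖ * (‖E‖ / ‖A‖) ^ n := by
  have hA' : 0 < ‖A‖ := norm_pos_iff.mpr hA
  have hB : ‖A‖ / 2 ≤ ‖A + E‖ := half_norm_le_norm_add (by linarith [norm_nonneg w])
  have hU : ‖A‖ / 2 ≤ ‖A + E + w‖ := by
    rw [add_assoc]
    exact half_norm_le_norm_add ((norm_add_le E w).trans h)
  have hB0 : A + E ≠ 0 := norm_pos_iff.mp (by linarith)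
  have hU0 : A + E + w ≠ 0 := norm_pos_iff.mp (by linarith)
  refine ⟨hU0, ?_⟩
  have hinv : ‖(A + E + w)⁻¹ - (A + E)⁻¹‖ ≤ 4 * ‖w‖ / ‖A‖ ^ 2 := by
    rw [inv_sub_inv hU0 hB0, show A + E - (A + E + w) = -w by ring, norm_div, norm_neg, norm_mul]
    calc ‖w‖ / (‖A + E + w‖ * ‖A + E‖) ≤ ‖w‖ / (‖A‖ / 2 * (‖A‖ / 2)) := by gcongr
      _ = 4 * ‖w‖ / ‖A‖ ^ 2 := by ring
  have htail : ‖(A + E)⁻¹ * (-E / A) ^ n‖ ≤ 2 / ‖A‖ * (‖E‖ / ‖A‖) ^ n := by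
    rw [norm_mul, norm_inv, norm_pow, norm_div, norm_neg]
    gcongr
    rw [← inv_div]
    exact inv_anti₀ (by positivity) hB
  rw [sum_inv_mul_neg_div_pow hA hB0]
  calc _ = ‖((A + E + w)⁻¹ - (A + E)⁻¹) + (A + E)⁻¹ * (-E / A) ^ n‖ := by congr 1; ring
    _ ≤ _ := (norm_add_le _ _).trans (add_le_add hinv htail)

lemma eventually_mul_le_mul_rpow (M : ℝ) {a β : ℝ} (ha : 0 < a) (hβ : β < 1) :
    ∀ᶠ b in 𝓝[>] 0, M * b ≤ a * b ^ β := by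
  have hlim : Tendsto (fun b : ℝ => M * b ^ (1 - β)) (𝓝[>] 0) (𝓝 0) := by
    have := ((continuousAt_rpow_const 0 (1 - β) (Or.inr (by linarith))).tendsto.mono_left
      (nhdsWithin_le_nhds (s := Set.Ioi 0))).const_mul M
    rwa [zero_rpow (by linarith), mul_zero] at this
  filter_upwards [hlim.eventually (eventually_le_nhds ha), self_mem_nhdsWithin] with b hb hb0
  calc M * b = M * b ^ (1 - β) * b ^ β := by
        rw [mul_assoc, ← rpow_add hb0, sub_add_cancel, rpow_one]
    _ ≤ a * b ^ β := mul_le_mul_of_nonneg_right hb (rpow_pos_of_pos hb0 β).le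

lemma exists_Ioc_forall_of_eventually {P : ℝ → Prop} {a δ : ℝ} (hδ : a < δ)
    (h : ∀ᶠ b in 𝓝[>] a, P b) : ∃ δ' ∈ Set.Ioc a δ, ∀ b ∈ Set.Ioc a δ', P b := by
  obtain ⟨u, hu, hsub⟩ := mem_nhdsGT_iff_exists_Ioc_subset.mp h
  exact ⟨min δ u, ⟨lt_min hδ hu, min_le_left _ _⟩,
    fun b hb => hsub ⟨hb.1, hb.2.trans (min_le_right _ _)⟩⟩

lemma rpow_neg_mul_sub_eq {b : ℝ} (hb : 0 < b) (β : ℝ) (j : ℕ) :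
    b ^ (-((j + 1 : ℝ) * β - j)) = b ^ j * ((b ^ β) ^ (j + 1))⁻¹ := by
  rw [← rpow_natCast b j, ← rpow_natCast, ← rpow_mul hb.le, ← rpow_neg hb.le, ← rpow_add hb]
  push_cast
  ring_nf

lemma expansion_term_eq (z e : ℂ) {b : ℝ} (hb : 0 < b) (β : ℝ) (j : ℕ) :
    (-1) ^ j * e ^ j / z ^ (j + 1) * ((b ^ (-((j + 1 : ℝ) * β - j)) : ℝ) : ℂ)
      = (z * ((b ^ β : ℝ) : ℂ))⁻¹ * (-(e * b) / (z * ((b ^ β : ℝ) : ℂ))) ^ j := by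
  rw [rpow_neg_mul_sub_eq hb]
  push_cast
  ring

lemma norm_inv_sub_expansion_le {z e u : ℂ} {b β q K : ℝ} (n : ℕ) (hz : z ≠ 0) (hK : 0 ≤ K)
    (hb : 0 < b) (hb1 : b ≤ 1) (hq : 1 ≤ q) (hn : q - β ≤ (1 - β) * n)
    (hsmall : (‖e‖ + K) * b ≤ ‖z‖ / 2 * b ^ β)
    (hu : ‖u - z * ((b ^ β : ℝ) : ℂ) - e * b‖ ≤ K * b ^ q) :
    u ≠ 0 ∧
      ‖u⁻¹ - ∑ j ∈ range n, (-1) ^ j * e ^ j / z ^ (j + 1) *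
          ((b ^ (-((j + 1 : ℝ) * β - j)) : ℝ) : ℂ)‖
        ≤ (4 * K / ‖z‖ ^ 2 + 2 / ‖z‖ * (‖e‖ / ‖z‖) ^ n) * b ^ (-(2 * β - q)) := by
  set A : ℂ := z * ((b ^ β : ℝ) : ℂ)
  have hbβ : 0 < b ^ β := rpow_pos_of_pos hb β
  have hnormA : ‖A‖ = ‖z‖ * b ^ β := by
    rw [norm_mul, Complex.norm_real, norm_of_nonneg hbβ.le]
  have hnormE : ‖e * b‖ = ‖e‖ * b := by
    rw [norm_mul, Complex.norm_real, norm_of_nonneg hb.le]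
  have hA : A ≠ 0 := mul_ne_zero hz (Complex.ofReal_ne_zero.mpr hbβ.ne')
  have hbq : b ^ q ≤ b := by
    simpa using rpow_le_rpow_of_exponent_ge hb hb1 hq
  have hEw : ‖e * b‖ + ‖u - A - e * b‖ ≤ ‖A‖ / 2 := by
    rw [hnormE, hnormA]
    nlinarith
  obtain ⟨hu0, hbound⟩ := norm_inv_add_add_sub_sum_le hA hEw n
  rw [show A + e * b + (u - A - e * b) = u by ring] at hu0 hbound
  refine ⟨hu0, ?_⟩
  simp_rw [expansion_term_eq z e hb β]
  refine hbound.trans ?_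
  have hw : 4 * ‖u - A - e * b‖ / (‖z‖ * b ^ β) ^ 2 ≤ 4 * K / ‖z‖ ^ 2 * b ^ (-(2 * β - q)) :=
    calc 4 * ‖u - A - e * b‖ / (‖z‖ * b ^ β) ^ 2 ≤ 4 * (K * b ^ q) / (‖z‖ * b ^ β) ^ 2 := by
          gcongr
      _ = 4 * K / ‖z‖ ^ 2 * (b ^ q / (b ^ β) ^ 2) := by ring
      _ = 4 * K / ‖z‖ ^ 2 * b ^ (-(2 * β - q)) := by
          rw [← rpow_natCast (b ^ β), ← rpow_mul hb.le, ← rpow_sub hb]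
          ring_nf
  have htail : 2 / (‖z‖ * b ^ β) * (‖e‖ * b / (‖z‖ * b ^ β)) ^ n
      ≤ 2 / ‖z‖ * (‖e‖ / ‖z‖) ^ n * b ^ (-(2 * β - q)) :=
    calc 2 / (‖z‖ * b ^ β) * (‖e‖ * b / (‖z‖ * b ^ β)) ^ n
        = 2 / ‖z‖ * (‖e‖ / ‖z‖) ^ n * ((b / b ^ β) ^ n / b ^ β) := by ring
      _ = 2 / ‖z‖ * (‖e‖ / ‖z‖) ^ n * b ^ ((1 - β) * n - β) := by
          rw [show b / b ^ β = b ^ (1 - β) by rw [rpow_sub hb, rpow_one],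
            ← rpow_natCast (b ^ (1 - β)), ← rpow_mul hb.le, ← rpow_sub hb]
      _ ≤ 2 / ‖z‖ * (‖e‖ / ‖z‖) ^ n * b ^ (-(2 * β - q)) :=
          mul_le_mul_of_nonneg_left (rpow_le_rpow_of_exponent_ge hb hb1 (by linarith))
            (by positivity)
  rw [hnormA, hnormE, add_mul]
  exact add_le_add hw htail

theorem stmt10 (β q c K δ : ℝ) (e₁ : ℂ)
    (hβ : β ∈ Set.Ioo (1/2 : ℝ) 1) (hq : q ∈ Set.Ioc 1 (2*β)) (hc : 0 < c)
    (hK : 0 < K) (hδ : 0 < δ)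
    (cβ : ℂ) (hcβ : cβ = (Real.Gamma (1-β) : ℂ) * Complex.exp (Complex.I * (β:ℂ) * (π:ℂ) / 2))
    (lam : ℝ → ℂ)
    (hlam : ∀ b ∈ Set.Ioc (0:ℝ) δ,
      ‖1 - lam b - (c:ℂ) * cβ * ((b ^ β : ℝ) : ℂ) - e₁ * (b:ℂ)‖ ≤ K * b ^ q) :
    ∃ δ' ∈ Set.Ioc (0:ℝ) δ, ∃ C : ℝ, 0 < C ∧ ∀ b ∈ Set.Ioc (0:ℝ) δ',
      lam b ≠ 1 ∧
      ‖(1 - lam b)⁻¹ - ∑ j ∈ Finset.range (⌊(q - β) / (1 - β)⌋₊ + 1),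
          ((-1:ℂ)^j * e₁^j / ((c:ℂ) * cβ)^(j+1)) *
            ((b ^ (-(((j:ℝ) + 1) * β - (j:ℝ))) : ℝ) : ℂ)‖
        ≤ C * b ^ (-(2*β - q)) := by
  obtain ⟨-, hβ1⟩ := hβ
  obtain ⟨hq1, -⟩ := hq
  have hz : (c : ℂ) * cβ ≠ 0 := by
    rw [hcβ]
    refine mul_ne_zero ?_ (mul_ne_zero ?_ (Complex.exp_ne_zero _)) <;> norm_cast
    exacts [hc.ne', (Gamma_pos_of_pos (by linarith)).ne']
  set a := ‖(c : ℂ) * cβ‖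
  have ha : 0 < a := norm_pos_iff.mpr hz
  set n := ⌊(q - β) / (1 - β)⌋₊ + 1
  have hn : q - β ≤ (1 - β) * n := by
    have := Nat.lt_floor_add_one ((q - β) / (1 - β))
    rw [div_lt_iff₀ (by linarith)] at this
    push_cast [n]
    linarith
  have hsmall : ∀ᶠ b in 𝓝[>] 0, b ≤ 1 ∧ (‖e₁‖ + K) * b ≤ a / 2 * b ^ β :=
    ((eventually_le_nhds one_pos).filter_mono nhdsWithin_le_nhds).and
      (eventually_mul_le_mul_rpow _ (half_pos ha) hβ1)
  obtain ⟨δ', hδ', hδ'small⟩ := exists_Ioc_forall_of_eventually hδ hsmall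
  refine ⟨δ', hδ', 4 * K / a ^ 2 + 2 / a * (‖e₁‖ / a) ^ n, by positivity, fun b hb => ?_⟩
  obtain ⟨hb1, hbsmall⟩ := hδ'small b hb
  obtain ⟨hne, hbound⟩ := norm_inv_sub_expansion_le n hz hK.le hb.1 hb1 hq1.le hn hbsmall
    (hlam b ⟨hb.1, hb.2.trans hδ'.2⟩)
  exact ⟨fun h => hne (by rw [h, sub_self]), hbound⟩
end

section
/- Let (Z,μ) be a probability space. Let σ : Z → ℕ be measurable with σ(z) ≥ 1 for all z and μ(σ > n) ≤ C₁ e^{−dn} for all n ≥ 1, where C₁, d > 0. For each j ∈ ℕ let τ_j : Z → [0,∞) be measurable with μ(τ_j > t) ≤ C₂ t^{−β₀} for all t ≥ 1 and all j, where C₂ > 0 and β₀ > 0. Define φ(z) = Σ_{j=0}^{σ(z)−1} τ_j(z). Then for every γ ∈ (0, β₀), ∫_Z σ φ^{γ} dμ < ∞. -/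
open MeasureTheory
open scoped ENNReal

/-!
On the fibre `{σ = n}` the integrand is at most `n ^ (1 + γ) * ∑ j < n, τ_j ^ γ`.
Fix `γ < r < β₀`. By a discrete layer-cake estimate the polynomial tails give `∫ τ_j ^ r ≤ M`
uniformly in `j`, so Hölder's inequality with exponent `r / γ` gives
`∫_{σ = n} τ_j ^ γ ≤ μ(σ = n) ^ (1 - γ / r) * M ^ (γ / r)`.
Summing over `n`, the exponential tail of `σ` beats the polynomial weight `n ^ (2 + γ)`.
-/

open Finset in
theorem Real.rpow_sum_le_card_rpow_mul_sum_rpow {ι : Type*} (s : Finset ι) {a : ι → ℝ}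
    (ha : ∀ i ∈ s, 0 ≤ a i) {γ : ℝ} (hγ : 0 < γ) :
    (∑ i ∈ s, a i) ^ γ ≤ (#s : ℝ) ^ γ * ∑ i ∈ s, a i ^ γ := by
  rcases s.eq_empty_or_nonempty with rfl | hs
  · simp [Real.zero_rpow hγ.ne']
  obtain ⟨i₀, hi₀, hmax⟩ := s.exists_max_image a hs
  calc (∑ i ∈ s, a i) ^ γ ≤ ((#s : ℝ) * a i₀) ^ γ := by
        refine Real.rpow_le_rpow (sum_nonneg ha) ?_ hγ.le
        simpa using s.sum_le_card_nsmul a (a i₀) hmax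
    _ = (#s : ℝ) ^ γ * a i₀ ^ γ := Real.mul_rpow (Nat.cast_nonneg _) (ha i₀ hi₀)
    _ ≤ (#s : ℝ) ^ γ * ∑ i ∈ s, a i ^ γ := by
        gcongr
        exact single_le_sum (fun i hi => Real.rpow_nonneg (ha i hi) γ) hi₀

theorem Real.summable_rpow_mul_exp_neg_nat_mul (s : ℝ) {c : ℝ} (hc : 0 < c) :
    Summable fun n : ℕ => (n : ℝ) ^ s * Real.exp (-c * n) := by
  have hlittle := (isLittleO_rpow_exp_pos_mul_atTop s (half_pos hc)).comp_tendsto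
    tendsto_natCast_atTop_atTop
  refine summable_of_isBigO_nat ?_ (hlittle.isBigO.mul (Asymptotics.isBigO_refl _ _))
  refine (Real.summable_exp_nat_mul_iff.mpr (neg_lt_zero.mpr (half_pos hc))).congr fun n => ?_
  simp only [Function.comp_apply, ← Real.exp_add]
  ring_nf

theorem ENNReal.ofReal_le_one_add_tsum_ite (x : ℝ) :
    ENNReal.ofReal x ≤ 1 + ∑' m : ℕ, if (m : ℝ) + 1 < x then 1 else 0 :=
  calc ENNReal.ofReal x ≤ ⌈x⌉₊ := by
        simpa using ENNReal.ofReal_le_ofReal (Nat.le_ceil x)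
    _ ≤ 1 + (⌈x⌉₊ - 1 : ℕ) := by norm_cast; omega
    _ = 1 + ∑ m ∈ Finset.range (⌈x⌉₊ - 1), if (m : ℝ) + 1 < x then 1 else 0 := by
        rw [Finset.sum_ite_of_true fun m hm => ?_]
        · simp
        exact_mod_cast Nat.lt_ceil.mp (by simp at hm; omega)
    _ ≤ 1 + ∑' m : ℕ, if (m : ℝ) + 1 < x then 1 else 0 := by
        gcongr; exact ENNReal.sum_le_tsum _

section

variable {Z : Type*} [MeasurableSpace Z] {μ : Measure Z}

theorem lintegral_ofReal_le_measure_univ_add_tsum {f : Z → ℝ} (hf : Measurable f) :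
    ∫⁻ z, ENNReal.ofReal (f z) ∂μ ≤ μ Set.univ + ∑' m : ℕ, μ {z | (m : ℝ) + 1 < f z} := by
  have hmeas (m : ℕ) : MeasurableSet {z | (m : ℝ) + 1 < f z} :=
    measurableSet_lt measurable_const hf
  calc ∫⁻ z, ENNReal.ofReal (f z) ∂μ
      ≤ ∫⁻ z, 1 + ∑' m : ℕ, {z | (m : ℝ) + 1 < f z}.indicator 1 z ∂μ := by
        refine lintegral_mono fun z => (ENNReal.ofReal_le_one_add_tsum_ite _).trans_eq ?_
        simp [Set.indicator_apply]
    _ = μ Set.univ + ∑' m : ℕ, μ {z | (m : ℝ) + 1 < f z} := by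
        rw [lintegral_add_left measurable_const, lintegral_one,
          lintegral_tsum fun m => (measurable_one.indicator (hmeas m)).aemeasurable]
        simp_rw [lintegral_indicator_one (hmeas _)]

theorem lintegral_ofReal_rpow_le_of_tail {f : Z → ℝ} (hf : Measurable f) (hf0 : 0 ≤ f)
    {C β p : ℝ} (hp : 0 < p)
    (htail : ∀ t : ℝ, 1 ≤ t → μ {z | t < f z} ≤ ENNReal.ofReal (C * t ^ (-β))) :
    ∫⁻ z, ENNReal.ofReal (f z ^ p) ∂μ
      ≤ μ Set.univ + ∑' m : ℕ, ENNReal.ofReal (C * ((m : ℝ) + 1) ^ (-(β / p))) := by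
  refine (lintegral_ofReal_le_measure_univ_add_tsum (hf.pow_const p)).trans ?_
  gcongr with m
  have hm : (0 : ℝ) ≤ m + 1 := by positivity
  have hlevel : {z | (m : ℝ) + 1 < f z ^ p} = {z | ((m : ℝ) + 1) ^ p⁻¹ < f z} := by
    ext z
    exact (Real.rpow_inv_lt_iff_of_pos hm (hf0 z) hp).symm
  rw [hlevel]
  refine (htail _ (Real.one_le_rpow (by linarith) (by positivity))).trans_eq ?_
  rw [← Real.rpow_mul hm]
  ring_nf

theorem exists_lintegral_ofReal_rpow_le_of_tail [IsFiniteMeasure μ] {C β p : ℝ}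
    (hp : 0 < p) (hpβ : p < β) :
    ∃ M < ∞, ∀ f : Z → ℝ, Measurable f → 0 ≤ f →
      (∀ t : ℝ, 1 ≤ t → μ {z | t < f z} ≤ ENNReal.ofReal (C * t ^ (-β))) →
      ∫⁻ z, ENNReal.ofReal (f z ^ p) ∂μ ≤ M := by
  refine ⟨_, ?_, fun f hf hf0 htail => lintegral_ofReal_rpow_le_of_tail hf hf0 hp htail⟩
  have hsum : Summable fun m : ℕ => C * ((m : ℝ) + 1) ^ (-(β / p)) := by
    refine .mul_left C ?_
    have := (summable_nat_add_iff 1).mpr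
      (Real.summable_nat_rpow.mpr (by rw [neg_lt_neg_iff, one_lt_div hp]; exact hpβ))
    simpa using this
  exact ENNReal.add_lt_top.mpr ⟨measure_lt_top μ _, hsum.tsum_ofReal_lt_top⟩

theorem setLIntegral_le_measure_rpow_mul_lintegral_rpow {p q : ℝ} (hpq : p.HolderConjugate q)
    {g : Z → ℝ≥0∞} (hg : AEMeasurable g μ) (s : Set Z) :
    ∫⁻ z in s, g z ∂μ ≤ μ s ^ (1 / p) * (∫⁻ z, g z ^ q ∂μ) ^ (1 / q) := by
  have holder := ENNReal.lintegral_mul_le_Lp_mul_Lq (μ.restrict s) hpq aemeasurable_const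
    hg.restrict (f := 1)
  simp only [Pi.one_apply, ENNReal.one_rpow, lintegral_one, Measure.restrict_apply_univ,
    Pi.mul_apply, one_mul] at holder
  refine holder.trans ?_
  gcongr
  · exact hpq.symm.one_div_nonneg
  · exact Measure.restrict_le_self

theorem setLIntegral_ofReal_rpow_le {f : Z → ℝ} (hf : Measurable f) (hf0 : 0 ≤ f) {γ r : ℝ}
    (hγ : 0 < γ) (hγr : γ < r) (s : Set Z) :
    ∫⁻ z in s, ENNReal.ofReal (f z ^ γ) ∂μ
      ≤ μ s ^ (1 - γ / r) * (∫⁻ z, ENNReal.ofReal (f z ^ r) ∂μ) ^ (γ / r) := by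
  have hpq : (r / γ).HolderConjugate (r / γ).conjExponent :=
    .conjExponent ((one_lt_div hγ).mpr hγr)
  have hexp : 1 / (r / γ).conjExponent = 1 - γ / r := by
    rw [eq_sub_iff_add_eq', ← one_div_div r γ, hpq.one_div_add_one_div, div_one]
  have hpow (z : Z) : ENNReal.ofReal (f z ^ γ) ^ (r / γ) = ENNReal.ofReal (f z ^ r) := by
    rw [ENNReal.ofReal_rpow_of_nonneg (Real.rpow_nonneg (hf0 z) γ) hpq.nonneg,
      ← Real.rpow_mul (hf0 z), mul_div_cancel₀ r hγ.ne']
  simpa only [hexp, hpow, one_div_div] using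
    setLIntegral_le_measure_rpow_mul_lintegral_rpow hpq.symm
      (hf.pow_const γ).ennreal_ofReal.aemeasurable s

theorem lintegral_eq_tsum_setLIntegral_fiber {σ : Z → ℕ} (hσ : Measurable σ) (f : Z → ℝ≥0∞) :
    ∫⁻ z, f z ∂μ = ∑' n, ∫⁻ z in σ ⁻¹' {n}, f z ∂μ := by
  rw [← lintegral_iUnion (fun n => hσ (measurableSet_singleton n)) (pairwise_disjoint_fiber σ),
    ← Set.preimage_iUnion, Set.iUnion_of_singleton, Set.preimage_univ, Measure.restrict_univ]

theorem measure_fiber_le_of_exp_tail [IsProbabilityMeasure μ] {σ : Z → ℕ} {C d : ℝ}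
    (hC : 0 ≤ C) (hd : 0 ≤ d)
    (htail : ∀ n : ℕ, 1 ≤ n → μ {z | n < σ z} ≤ ENNReal.ofReal (C * Real.exp (-d * n)))
    (n : ℕ) : μ (σ ⁻¹' {n}) ≤ ENNReal.ofReal ((C + 1) * Real.exp d * Real.exp (-d * n)) := by
  have hexp (m : ℕ) : Real.exp d * Real.exp (-d * (m + 1 : ℕ)) = Real.exp (-d * m) := by
    rw [← Real.exp_add]; push_cast; ring_nf
  rcases n with _ | m
  · calc μ (σ ⁻¹' {0}) ≤ 1 := prob_le_one
      _ ≤ _ := by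
        rw [← ENNReal.ofReal_one]
        gcongr
        simp only [CharP.cast_eq_zero, mul_zero, Real.exp_zero, mul_one]
        nlinarith [Real.one_le_exp hd]
  rcases m with _ | m
  · calc μ (σ ⁻¹' {0 + 1}) ≤ 1 := prob_le_one
      _ ≤ _ := by
        rw [← ENNReal.ofReal_one, mul_assoc, hexp]
        gcongr
        simp only [CharP.cast_eq_zero, mul_zero, Real.exp_zero, mul_one]
        linarith
  calc μ (σ ⁻¹' {m + 1 + 1}) ≤ μ {z | m + 1 < σ z} :=
        measure_mono fun z (hz : σ z = m + 1 + 1) => by simp [hz]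
    _ ≤ ENNReal.ofReal (C * Real.exp (-d * (m + 1 : ℕ))) := htail (m + 1) (by omega)
    _ ≤ _ := by
        rw [mul_assoc, hexp]
        gcongr
        linarith

theorem tsum_ofReal_rpow_mul_rpow_lt_top {a : ℕ → ℝ≥0∞} {K c θ : ℝ} (hK : 0 ≤ K) (hc : 0 < c)
    (hθ : 0 < θ) (ha : ∀ n, a n ≤ ENNReal.ofReal (K * Real.exp (-c * n))) (s : ℝ) :
    ∑' n : ℕ, ENNReal.ofReal ((n : ℝ) ^ s) * a n ^ θ < ∞ := by
  have hsum := (Real.summable_rpow_mul_exp_neg_nat_mul s (mul_pos hc hθ)).mul_left (K ^ θ)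
  refine lt_of_le_of_lt (ENNReal.tsum_le_tsum fun n => ?_) hsum.tsum_ofReal_lt_top
  calc ENNReal.ofReal ((n : ℝ) ^ s) * a n ^ θ
      ≤ ENNReal.ofReal ((n : ℝ) ^ s) * ENNReal.ofReal (K * Real.exp (-c * n)) ^ θ := by
        gcongr; exact ha n
    _ = ENNReal.ofReal (K ^ θ * ((n : ℝ) ^ s * Real.exp (-(c * θ) * n))) := by
        rw [ENNReal.ofReal_rpow_of_nonneg (by positivity) hθ.le,
          ← ENNReal.ofReal_mul (by positivity), Real.mul_rpow hK (Real.exp_nonneg _),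
          ← Real.exp_mul]
        ring_nf

open Finset in
theorem setLIntegral_fiber_mul_sum_rpow_le {σ : Z → ℕ} {τ : ℕ → Z → ℝ}
    (hτ : ∀ j, Measurable (τ j)) (hτ0 : ∀ j z, 0 ≤ τ j z) {γ : ℝ} (hγ : 0 < γ) (n : ℕ)
    {B : ℝ≥0∞} (hB : ∀ j, ∫⁻ z in σ ⁻¹' {n}, ENNReal.ofReal (τ j z ^ γ) ∂μ ≤ B) :
    ∫⁻ z in σ ⁻¹' {n}, ENNReal.ofReal ((σ z : ℝ) * (∑ j ∈ range (σ z), τ j z) ^ γ) ∂μ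
      ≤ ENNReal.ofReal ((n : ℝ) ^ (2 + γ)) * B := by
  have hτγ (j : ℕ) : Measurable fun z => ENNReal.ofReal (τ j z ^ γ) :=
    ((hτ j).pow_const γ).ennreal_ofReal
  have hsum : Measurable fun z => ∑ j ∈ range n, ENNReal.ofReal (τ j z ^ γ) :=
    Finset.measurable_sum _ fun j _ => hτγ j
  have hpt : ∀ z ∈ σ ⁻¹' {n}, ENNReal.ofReal ((σ z : ℝ) * (∑ j ∈ range (σ z), τ j z) ^ γ)
      ≤ ENNReal.ofReal ((n : ℝ) ^ (1 + γ)) * ∑ j ∈ range n, ENNReal.ofReal (τ j z ^ γ) := by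
    rintro z (hz : σ z = n)
    rw [hz, ← ENNReal.ofReal_sum_of_nonneg fun j _ => Real.rpow_nonneg (hτ0 j z) γ,
      ← ENNReal.ofReal_mul (by positivity)]
    refine ENNReal.ofReal_le_ofReal ?_
    calc (n : ℝ) * (∑ j ∈ range n, τ j z) ^ γ
        ≤ n * ((n : ℝ) ^ γ * ∑ j ∈ range n, τ j z ^ γ) := by
          gcongr
          simpa using Real.rpow_sum_le_card_rpow_mul_sum_rpow (range n) (fun j _ => hτ0 j z) hγ
      _ = (n : ℝ) ^ (1 + γ) * ∑ j ∈ range n, τ j z ^ γ := by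
          rw [Real.rpow_add' (Nat.cast_nonneg n) (by linarith), Real.rpow_one, mul_assoc]
  calc _ ≤ ∫⁻ z in σ ⁻¹' {n},
        ENNReal.ofReal ((n : ℝ) ^ (1 + γ)) * ∑ j ∈ range n, ENNReal.ofReal (τ j z ^ γ) ∂μ :=
        setLIntegral_mono (measurable_const.mul hsum) hpt
    _ = ENNReal.ofReal ((n : ℝ) ^ (1 + γ))
        * ∑ j ∈ range n, ∫⁻ z in σ ⁻¹' {n}, ENNReal.ofReal (τ j z ^ γ) ∂μ := by
        rw [lintegral_const_mul _ hsum, lintegral_finsetSum _ fun j _ => hτγ j]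
    _ ≤ ENNReal.ofReal ((n : ℝ) ^ (1 + γ)) * ∑ _j ∈ range n, B := by
        gcongr with j; exact hB j
    _ = ENNReal.ofReal ((n : ℝ) ^ (2 + γ)) * B := by
        have hpow : (n : ℝ) ^ (2 + γ) = (n : ℝ) ^ (1 + γ) * n := by
          rw [show (2 : ℝ) + γ = 1 + γ + 1 by ring,
            Real.rpow_add' (Nat.cast_nonneg n) (by linarith), Real.rpow_one]
        rw [sum_const, card_range, nsmul_eq_mul, ← mul_assoc, hpow,
          ENNReal.ofReal_mul (by positivity), ENNReal.ofReal_natCast]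

end

theorem stmt13_general {Z : Type*} [MeasurableSpace Z] (μ : Measure Z) [IsProbabilityMeasure μ]
    (σ : Z → ℕ) (hσmeas : Measurable σ)
    (C₁ d : ℝ) (hC₁ : 0 < C₁) (hd : 0 < d)
    (hσtail : ∀ n : ℕ, 1 ≤ n →
      μ {z | n < σ z} ≤ ENNReal.ofReal (C₁ * Real.exp (-d * n)))
    (τ : ℕ → Z → ℝ) (hτmeas : ∀ j, Measurable (τ j)) (hτ0 : ∀ j z, 0 ≤ τ j z)
    (C₂ β₀ : ℝ)
    (hτtail : ∀ j : ℕ, ∀ t : ℝ, 1 ≤ t →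
      μ {z | t < τ j z} ≤ ENNReal.ofReal (C₂ * t ^ (-β₀)))
    (γ : ℝ) (hγ : γ ∈ Set.Ioo 0 β₀) :
    ∫⁻ z, ENNReal.ofReal ((σ z : ℝ) * (∑ j ∈ Finset.range (σ z), τ j z) ^ γ) ∂μ < ⊤ := by
  obtain ⟨hγ0, hγβ⟩ := hγ
  obtain ⟨r, hγr, hrβ⟩ := exists_between hγβ
  have hr : 0 < r := hγ0.trans hγr
  obtain ⟨M, hM, hMτ⟩ := exists_lintegral_ofReal_rpow_le_of_tail (μ := μ) (C := C₂) hr hrβ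
  have hfiber (n j : ℕ) : ∫⁻ z in σ ⁻¹' {n}, ENNReal.ofReal (τ j z ^ γ) ∂μ
      ≤ μ (σ ⁻¹' {n}) ^ (1 - γ / r) * M ^ (γ / r) := by
    refine (setLIntegral_ofReal_rpow_le (hτmeas j) (hτ0 j) hγ0 hγr _).trans ?_
    gcongr
    exact hMτ _ (hτmeas j) (hτ0 j) (hτtail j)
  calc _ = ∑' n, ∫⁻ z in σ ⁻¹' {n},
        ENNReal.ofReal ((σ z : ℝ) * (∑ j ∈ Finset.range (σ z), τ j z) ^ γ) ∂μ :=
        lintegral_eq_tsum_setLIntegral_fiber hσmeas _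
    _ ≤ ∑' n : ℕ, ENNReal.ofReal ((n : ℝ) ^ (2 + γ))
        * (μ (σ ⁻¹' {n}) ^ (1 - γ / r) * M ^ (γ / r)) :=
        ENNReal.tsum_le_tsum fun n =>
          setLIntegral_fiber_mul_sum_rpow_le hτmeas hτ0 hγ0 n (hfiber n)
    _ = (∑' n : ℕ, ENNReal.ofReal ((n : ℝ) ^ (2 + γ)) * μ (σ ⁻¹' {n}) ^ (1 - γ / r))
        * M ^ (γ / r) := by
        simp_rw [← mul_assoc, ENNReal.tsum_mul_right]
    _ < ⊤ := ENNReal.mul_lt_top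
        (tsum_ofReal_rpow_mul_rpow_lt_top (mul_nonneg (by linarith) (Real.exp_nonneg d)) hd
          (sub_pos.mpr ((div_lt_one hr).mpr hγr))
          (measure_fiber_le_of_exp_tail hC₁.le hd.le hσtail) _)
        (ENNReal.rpow_lt_top_of_nonneg (by positivity) hM.ne)

theorem stmt13 {Z : Type*} [MeasurableSpace Z] (μ : Measure Z) [IsProbabilityMeasure μ]
    (σ : Z → ℕ) (hσmeas : Measurable σ) (hσ1 : ∀ z, 1 ≤ σ z)
    (C₁ d : ℝ) (hC₁ : 0 < C₁) (hd : 0 < d)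
    (hσtail : ∀ n : ℕ, 1 ≤ n →
      μ {z | n < σ z} ≤ ENNReal.ofReal (C₁ * Real.exp (-d * n)))
    (τ : ℕ → Z → ℝ) (hτmeas : ∀ j, Measurable (τ j)) (hτ0 : ∀ j z, 0 ≤ τ j z)
    (C₂ β₀ : ℝ) (hC₂ : 0 < C₂) (hβ₀ : 0 < β₀)
    (hτtail : ∀ j : ℕ, ∀ t : ℝ, 1 ≤ t →
      μ {z | t < τ j z} ≤ ENNReal.ofReal (C₂ * t ^ (-β₀)))
    (γ : ℝ) (hγ : γ ∈ Set.Ioo 0 β₀) :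
    ∫⁻ z, ENNReal.ofReal ((σ z : ℝ) * (∑ j ∈ Finset.range (σ z), τ j z) ^ γ) ∂μ < ⊤ :=
  stmt13_general μ σ hσmeas C₁ d hC₁ hd hσtail τ hτmeas hτ0 C₂ β₀ hτtail γ hγ
end

section
/- Let (Z,μ) be a probability space. Let σ : Z → ℕ be measurable with σ(z) ≥ 1 for all z and μ(σ > n) ≤ C₁ e^{−dn} for all n ≥ 1, where C₁, d > 0. For each j ∈ ℕ let τ_j : Z → [0,∞) be measurable with μ(τ_j > t) ≤ C₂ t^{−β₀} for all t ≥ 1 and all j, where C₂ > 0 and β₀ > 0. Define φ(z) = Σ_{j=0}^{σ(z)−1} τ_j(z). Then for every γ ∈ (0, β₀) there exists C > 0 such that ∫_Z σ · 1_{{φ > t}} dμ ≤ C t^{−γ} for all t ≥ 1. In particular μ(φ > t) ≤ C t^{−γ} for all t ≥ 1. -/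
/-!
Split at `N ≈ ((γ + 1) / d) log t`. By the layer-cake formula for the `ℕ`-valued `σ`,
`∫_S σ = ∑ₙ μ(σ > n, S) ≤ N μ(S) + ∑_{n ≥ N} μ(σ > n)`, and the exponential tail of `σ` makes the
last sum `O(e^{-dN}) = O(t^{-γ-1})`. On `{σ ≤ N}`, `φ > t` forces `τ_j > t / N` for some `j < N`,
so `μ(S) ≤ N C₂ (t / N)^{-β₀} + C₁ e^{-dN}`. As `N = O(t^δ)` for every `δ > 0`, choosing
`δ (2 + β₀) = β₀ - γ` turns `N² · N^{β₀} t^{-β₀}` into `O(t^{-γ})`.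
-/

open MeasureTheory Set Real Finset
open scoped ENNReal

lemma ENNReal.natCast_eq_tsum_ite_lt (k : ℕ) :
    (k : ℝ≥0∞) = ∑' n : ℕ, if n < k then 1 else 0 := by
  rw [tsum_eq_sum (s := range k) fun n hn => if_neg (by simpa using hn),
    Finset.sum_ite_of_true fun n hn => mem_range.mp hn]
  simp

lemma ENNReal.tsum_ofReal_mul_pow {c r : ℝ} (hc : 0 ≤ c) (hr0 : 0 ≤ r) (hr1 : r < 1) :
    ∑' n : ℕ, ENNReal.ofReal (c * r ^ n) = ENNReal.ofReal (c / (1 - r)) := by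
  simp_rw [ENNReal.ofReal_mul hc, ENNReal.ofReal_pow hr0]
  rw [ENNReal.tsum_mul_left, ENNReal.tsum_geometric, ← ENNReal.ofReal_one,
    ← ENNReal.ofReal_sub _ hr0, ← ENNReal.ofReal_inv_of_pos (by linarith),
    ← ENNReal.ofReal_mul hc, div_eq_mul_inv]

lemma one_sub_exp_neg_pos {d : ℝ} (hd : 0 < d) : 0 < 1 - exp (-d) :=
  sub_pos.mpr (exp_lt_one_iff.mpr (neg_lt_zero.mpr hd))

lemma exists_lt_div_of_lt_sum_range {f : ℕ → ℝ} (hf : ∀ j, 0 ≤ f j) {k N : ℕ} (hN : 0 < N)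
    (hk : k ≤ N) {t : ℝ} (ht : t < ∑ j ∈ range k, f j) : ∃ j < N, t / N < f j := by
  by_contra! h
  have hsum : ∑ j ∈ range k, f j ≤ ∑ j ∈ range N, f j :=
    sum_le_sum_of_subset_of_nonneg (range_subset_range.mpr hk) fun j _ _ => hf j
  have hle : ∑ j ∈ range N, f j ≤ ∑ _j ∈ range N, t / N :=
    sum_le_sum fun j hj => h j (mem_range.mp hj)
  rw [sum_const, card_range, nsmul_eq_mul, mul_div_cancel₀ _ (by positivity)] at hle
  linarith

section Tails

variable {Z : Type*} [MeasurableSpace Z] {μ : Measure Z}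

lemma setLIntegral_natCast_eq_tsum {σ : Z → ℕ} (hσ : Measurable σ) (S : Set Z) :
    ∫⁻ z in S, (σ z : ℝ≥0∞) ∂μ = ∑' n : ℕ, μ ({z | n < σ z} ∩ S) := by
  have hmeas (n : ℕ) : MeasurableSet {z | n < σ z} := measurableSet_lt measurable_const hσ
  calc ∫⁻ z in S, (σ z : ℝ≥0∞) ∂μ
      = ∫⁻ z in S, ∑' n : ℕ, {w | n < σ w}.indicator 1 z ∂μ := by
        congr! 2 with z
        simp only [ENNReal.natCast_eq_tsum_ite_lt, indicator_apply, mem_ofPred_eq, Pi.one_apply]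
    _ = ∑' n : ℕ, μ ({z | n < σ z} ∩ S) := by
        rw [lintegral_tsum fun n => (measurable_one.indicator (hmeas n)).aemeasurable]
        simp_rw [lintegral_indicator_one (hmeas _), Measure.restrict_apply (hmeas _)]

lemma setLIntegral_natCast_le {σ : Z → ℕ} (hσ : Measurable σ) (S : Set Z) (N : ℕ) :
    ∫⁻ z in S, (σ z : ℝ≥0∞) ∂μ ≤ N * μ S + ∑' n : ℕ, μ {z | n + N < σ z} := by
  rw [setLIntegral_natCast_eq_tsum hσ, ← ENNReal.summable.sum_add_tsum_nat_add' (k := N)]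
  gcongr
  · calc ∑ n ∈ range N, μ ({z | n < σ z} ∩ S) ≤ ∑ _n ∈ range N, μ S := by
          gcongr
          exact inter_subset_right
      _ = N * μ S := by rw [sum_const, card_range, nsmul_eq_mul]
  · exact inter_subset_left

lemma measure_le_setLIntegral_natCast {σ : Z → ℕ} (hσ : ∀ z, 1 ≤ σ z) (S : Set Z) :
    μ S ≤ ∫⁻ z in S, (σ z : ℝ≥0∞) ∂μ := by
  rw [← setLIntegral_one]
  exact lintegral_mono fun z => Nat.one_le_cast.mpr (hσ z)

lemma tsum_measure_add_lt_le_of_exp_tail {σ : Z → ℕ} {C d : ℝ} (hC : 0 ≤ C) (hd : 0 < d)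
    (htail : ∀ n : ℕ, 1 ≤ n → μ {z | n < σ z} ≤ ENNReal.ofReal (C * exp (-d * n)))
    {N : ℕ} (hN : 1 ≤ N) :
    ∑' n : ℕ, μ {z | n + N < σ z} ≤ ENNReal.ofReal (C * exp (-d * N) / (1 - exp (-d))) := by
  have hterm (n : ℕ) : C * exp (-d * ↑(n + N)) = C * exp (-d * N) * exp (-d) ^ n := by
    rw [← exp_nat_mul, mul_assoc, ← exp_add]
    push_cast
    ring_nf
  calc ∑' n : ℕ, μ {z | n + N < σ z}
      ≤ ∑' n : ℕ, ENNReal.ofReal (C * exp (-d * N) * exp (-d) ^ n) :=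
        ENNReal.tsum_le_tsum fun n => (htail (n + N) (by omega)).trans_eq (by rw [hterm])
    _ = _ := ENNReal.tsum_ofReal_mul_pow (by positivity) (exp_nonneg _)
        (exp_lt_one_iff.mpr (neg_lt_zero.mpr hd))

lemma measure_lt_le_max_one_mul_rpow [IsProbabilityMeasure μ] {f : Z → ℝ} {C β : ℝ}
    (hβ : 0 ≤ β) (htail : ∀ t : ℝ, 1 ≤ t → μ {z | t < f z} ≤ ENNReal.ofReal (C * t ^ (-β)))
    {s : ℝ} (hs : 0 < s) : μ {z | s < f z} ≤ ENNReal.ofReal (max C 1 * s ^ (-β)) := by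
  rcases le_or_gt 1 s with h1 | h1
  · exact (htail s h1).trans (ENNReal.ofReal_le_ofReal (by gcongr; exact le_max_left _ _))
  · calc μ {z | s < f z} ≤ ENNReal.ofReal 1 := by simpa using prob_le_one
      _ ≤ _ := ENNReal.ofReal_le_ofReal (one_le_mul_of_one_le_of_one_le (le_max_right _ _)
          (one_le_rpow_of_pos_of_le_one_of_nonpos hs h1.le (by linarith)))

lemma measure_lt_sum_range_le {σ : Z → ℕ} {τ : ℕ → Z → ℝ} (hτ : ∀ j z, 0 ≤ τ j z) {N : ℕ}
    (hN : 0 < N) (t : ℝ) :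
    μ {z | t < ∑ j ∈ range (σ z), τ j z} ≤
      ∑ j ∈ range N, μ {z | t / N < τ j z} + μ {z | N < σ z} := by
  have hsub : {z | t < ∑ j ∈ range (σ z), τ j z} ⊆
      (⋃ j ∈ range N, {z | t / N < τ j z}) ∪ {z | N < σ z} := by
    intro z hz
    rcases le_or_gt (σ z) N with hσN | hσN
    · obtain ⟨j, hj, hτj⟩ := exists_lt_div_of_lt_sum_range (hτ · z) hN hσN hz
      exact Or.inl (mem_biUnion (mem_range.mpr hj) hτj)
    · exact Or.inr hσN
  exact (measure_mono hsub).trans <| (measure_union_le _ _).trans <|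
    add_le_add_left (measure_biUnion_finset_le _ _) _

lemma setLIntegral_natCast_le_ofReal {σ : Z → ℕ} (hσ : Measurable σ) {τ : ℕ → Z → ℝ}
    (hτ : ∀ j z, 0 ≤ τ j z) {C₁ C₂ d β : ℝ} (hC₁ : 0 ≤ C₁) (hC₂ : 0 ≤ C₂) (hd : 0 < d)
    (hσtail : ∀ n : ℕ, 1 ≤ n → μ {z | n < σ z} ≤ ENNReal.ofReal (C₁ * exp (-d * n)))
    (hτtail : ∀ j : ℕ, ∀ s : ℝ, 0 < s → μ {z | s < τ j z} ≤ ENNReal.ofReal (C₂ * s ^ (-β)))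
    {t : ℝ} (ht : 0 < t) {N : ℕ} (hN : 1 ≤ N) :
    ∫⁻ z in {z | t < ∑ j ∈ range (σ z), τ j z}, (σ z : ℝ≥0∞) ∂μ ≤
      ENNReal.ofReal (N * (N * (C₂ * (t / N) ^ (-β)) + C₁ * exp (-d * N)) +
        C₁ * exp (-d * N) / (1 - exp (-d))) := by
  have hN₀ : (0 : ℝ) < N := by exact_mod_cast hN
  have hS : μ {z | t < ∑ j ∈ range (σ z), τ j z} ≤
      N * ENNReal.ofReal (C₂ * (t / N) ^ (-β)) + ENNReal.ofReal (C₁ * exp (-d * N)) := by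
    refine (measure_lt_sum_range_le hτ hN t).trans (add_le_add ?_ (hσtail N hN))
    calc ∑ j ∈ range N, μ {z | t / N < τ j z}
        ≤ ∑ _j ∈ range N, ENNReal.ofReal (C₂ * (t / N) ^ (-β)) :=
          sum_le_sum fun j _ => hτtail j _ (by positivity)
      _ = _ := by rw [sum_const, card_range, nsmul_eq_mul]
  have hr : 0 < 1 - exp (-d) := one_sub_exp_neg_pos hd
  calc ∫⁻ z in {z | t < ∑ j ∈ range (σ z), τ j z}, (σ z : ℝ≥0∞) ∂μ
      ≤ N * (N * ENNReal.ofReal (C₂ * (t / N) ^ (-β)) + ENNReal.ofReal (C₁ * exp (-d * N))) +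
          ENNReal.ofReal (C₁ * exp (-d * N) / (1 - exp (-d))) :=
        (setLIntegral_natCast_le hσ _ N).trans
          (add_le_add (by gcongr) (tsum_measure_add_lt_le_of_exp_tail hC₁ hd hσtail hN))
    _ = _ := by
        simp only [← ENNReal.ofReal_natCast, ← ENNReal.ofReal_mul hN₀.le]
        rw [← ENNReal.ofReal_add (by positivity) (by positivity), ← ENNReal.ofReal_mul hN₀.le,
          ← ENNReal.ofReal_add (by positivity) (div_nonneg (by positivity) hr.le)]

end Tails

lemma exists_nat_le_mul_rpow_and_exp_le {a d δ : ℝ} (ha : 0 ≤ a) (hd : 0 < d) (hδ : 0 < δ) :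
    ∃ K > 0, ∀ t : ℝ, 1 ≤ t →
      ∃ N : ℕ, 1 ≤ N ∧ (N : ℝ) ≤ K * t ^ δ ∧ exp (-d * N) ≤ t ^ (-a) := by
  refine ⟨a / (d * δ) + 2, by positivity, fun t ht => ⟨⌈a / d * log t⌉₊ + 1, by omega, ?_, ?_⟩⟩
  · have hlog : 0 ≤ a / d * log t := mul_nonneg (by positivity) (log_nonneg ht)
    have htδ : 1 ≤ t ^ δ := one_le_rpow ht hδ.le
    calc ((⌈a / d * log t⌉₊ + 1 : ℕ) : ℝ) ≤ a / d * log t + 2 := by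
          push_cast
          linarith [Nat.ceil_lt_add_one hlog]
      _ ≤ a / d * (t ^ δ / δ) + 2 * t ^ δ := by
          gcongr
          · exact log_le_rpow_div (by linarith) hδ
          · linarith
      _ = (a / (d * δ) + 2) * t ^ δ := by field_simp
  · rw [rpow_def_of_pos (by linarith), exp_le_exp]
    have hceil : a / d * log t ≤ ⌈a / d * log t⌉₊ := Nat.le_ceil _
    have hda : d * (a / d * log t) = a * log t := by field_simp
    push_cast
    nlinarith

lemma natCast_mul_natCast_mul_div_rpow_le {t K δ β γ : ℝ} {N : ℕ} (ht : 0 < t) (hK : 0 ≤ K)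
    (hβ : 0 ≤ β) (hδ : δ * (2 + β) = β - γ) (hNK : (N : ℝ) ≤ K * t ^ δ) :
    N * (N * (t / N) ^ (-β)) ≤ K ^ (2 + β) * t ^ (-γ) := by
  have hN : (0 : ℝ) ≤ N := N.cast_nonneg
  calc (N : ℝ) * (N * (t / N) ^ (-β)) = N ^ (2 + β) * t ^ (-β) := by
        rw [rpow_add' hN (by positivity), rpow_two, rpow_neg (div_nonneg ht.le hN),
          div_rpow ht.le hN, inv_div, rpow_neg ht.le]
        ring
    _ ≤ (K * t ^ δ) ^ (2 + β) * t ^ (-β) := by gcongr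
    _ = K ^ (2 + β) * t ^ (-γ) := by
        rw [mul_rpow hK (by positivity), ← rpow_mul ht.le, mul_assoc, ← rpow_add ht, hδ]
        ring_nf

lemma natCast_mul_exp_le {t K δ γ d : ℝ} {N : ℕ} (ht : 1 ≤ t) (hK : 0 ≤ K) (hδ : δ ≤ 1)
    (hNK : (N : ℝ) ≤ K * t ^ δ) (hexp : exp (-d * N) ≤ t ^ (-(γ + 1))) :
    N * exp (-d * N) ≤ K * t ^ (-γ) := by
  have ht₀ : 0 < t := by linarith
  calc N * exp (-d * N) ≤ K * t ^ δ * t ^ (-(γ + 1)) :=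
        mul_le_mul hNK hexp (exp_nonneg _) (by positivity)
    _ ≤ K * t ^ (1 : ℝ) * t ^ (-(γ + 1)) := by gcongr
    _ = K * t ^ (-γ) := by rw [mul_assoc, ← rpow_add ht₀]; ring_nf

lemma tail_bound_le_mul_rpow {t K δ β γ C₁ C₂ d : ℝ} {N : ℕ} (ht : 1 ≤ t) (hK : 0 ≤ K)
    (hβ : 0 ≤ β) (hC₁ : 0 ≤ C₁) (hC₂ : 0 ≤ C₂) (hd : 0 < d) (hδ : δ * (2 + β) = β - γ) (hδ1 : δ ≤ 1)
    (hNK : (N : ℝ) ≤ K * t ^ δ) (hexp : exp (-d * N) ≤ t ^ (-(γ + 1))) :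
    N * (N * (C₂ * (t / N) ^ (-β)) + C₁ * exp (-d * N)) + C₁ * exp (-d * N) / (1 - exp (-d)) ≤
      (C₂ * K ^ (2 + β) + C₁ * K + C₁ / (1 - exp (-d))) * t ^ (-γ) := by
  have ht₀ : 0 < t := by linarith
  have hr : 0 < 1 - exp (-d) := one_sub_exp_neg_pos hd
  have hexp' : exp (-d * N) ≤ t ^ (-γ) :=
    hexp.trans (rpow_le_rpow_of_exponent_le ht (by linarith))
  calc N * (N * (C₂ * (t / N) ^ (-β)) + C₁ * exp (-d * N)) + C₁ * exp (-d * N) / (1 - exp (-d))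
      = C₂ * (N * (N * (t / N) ^ (-β))) + C₁ * (N * exp (-d * N)) +
          C₁ / (1 - exp (-d)) * exp (-d * N) := by ring
    _ ≤ C₂ * (K ^ (2 + β) * t ^ (-γ)) + C₁ * (K * t ^ (-γ)) +
          C₁ / (1 - exp (-d)) * t ^ (-γ) := by
        gcongr C₂ * ?_ + C₁ * ?_ + _ * ?_
        · exact natCast_mul_natCast_mul_div_rpow_le ht₀ hK hβ hδ hNK
        · exact natCast_mul_exp_le ht hK hδ1 hNK hexp
    _ = _ := by ring

theorem stmt14_general {Z : Type*} [MeasurableSpace Z] (μ : Measure Z) [IsProbabilityMeasure μ]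
    (σ : Z → ℕ) (hσmeas : Measurable σ) (hσ1 : ∀ z, 1 ≤ σ z)
    (C₁ d : ℝ) (hC₁ : 0 < C₁) (hd : 0 < d)
    (hσtail : ∀ n : ℕ, 1 ≤ n →
      μ {z | n < σ z} ≤ ENNReal.ofReal (C₁ * Real.exp (-d * n)))
    (τ : ℕ → Z → ℝ) (hτ0 : ∀ j z, 0 ≤ τ j z)
    (C₂ β₀ : ℝ)
    (hτtail : ∀ j : ℕ, ∀ t : ℝ, 1 ≤ t →
      μ {z | t < τ j z} ≤ ENNReal.ofReal (C₂ * t ^ (-β₀)))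
    (γ : ℝ) (hγ : γ ∈ Set.Ioo 0 β₀) :
    ∃ C : ℝ, 0 < C ∧ ∀ t : ℝ, 1 ≤ t →
      (∫⁻ z in {z | t < ∑ j ∈ Finset.range (σ z), τ j z}, (σ z : ℝ≥0∞) ∂μ)
          ≤ ENNReal.ofReal (C * t ^ (-γ)) ∧
      μ {z | t < ∑ j ∈ Finset.range (σ z), τ j z} ≤ ENNReal.ofReal (C * t ^ (-γ)) := by
  obtain ⟨hγ₀, hγβ⟩ := hγ
  have hβ₀ : 0 ≤ β₀ := by linarith
  set δ := (β₀ - γ) / (2 + β₀)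
  have hδ : δ * (2 + β₀) = β₀ - γ := div_mul_cancel₀ _ (by linarith)
  have hδ1 : δ ≤ 1 := (div_le_one (by linarith)).mpr (by linarith)
  have hδ₀ : 0 < δ := div_pos (by linarith) (by linarith)
  obtain ⟨K, hK, hNK⟩ := exists_nat_le_mul_rpow_and_exp_le (a := γ + 1) (by linarith) hd hδ₀
  have hr : 0 < 1 - exp (-d) := one_sub_exp_neg_pos hd
  refine ⟨max C₂ 1 * K ^ (2 + β₀) + C₁ * K + C₁ / (1 - exp (-d)), by positivity, fun t ht => ?_⟩
  obtain ⟨N, hN, hNt, hexp⟩ := hNK t ht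
  have hint := (setLIntegral_natCast_le_ofReal hσmeas hτ0 hC₁.le (by positivity) hd hσtail
    (fun j s hs => measure_lt_le_max_one_mul_rpow hβ₀ (hτtail j) hs) (by linarith) hN).trans
    (ENNReal.ofReal_le_ofReal
      (tail_bound_le_mul_rpow ht hK.le hβ₀ hC₁.le (by positivity) hd hδ hδ1 hNt hexp))
  exact ⟨hint, (measure_le_setLIntegral_natCast hσ1 _).trans hint⟩

theorem stmt14 {Z : Type*} [MeasurableSpace Z] (μ : Measure Z) [IsProbabilityMeasure μ]
    (σ : Z → ℕ) (hσmeas : Measurable σ) (hσ1 : ∀ z, 1 ≤ σ z)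
    (C₁ d : ℝ) (hC₁ : 0 < C₁) (hd : 0 < d)
    (hσtail : ∀ n : ℕ, 1 ≤ n →
      μ {z | n < σ z} ≤ ENNReal.ofReal (C₁ * Real.exp (-d * n)))
    (τ : ℕ → Z → ℝ) (hτmeas : ∀ j, Measurable (τ j)) (hτ0 : ∀ j z, 0 ≤ τ j z)
    (C₂ β₀ : ℝ) (hC₂ : 0 < C₂) (hβ₀ : 0 < β₀)
    (hτtail : ∀ j : ℕ, ∀ t : ℝ, 1 ≤ t →
      μ {z | t < τ j z} ≤ ENNReal.ofReal (C₂ * t ^ (-β₀)))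
    (γ : ℝ) (hγ : γ ∈ Set.Ioo 0 β₀) :
    ∃ C : ℝ, 0 < C ∧ ∀ t : ℝ, 1 ≤ t →
      (∫⁻ z in {z | t < ∑ j ∈ Finset.range (σ z), τ j z}, (σ z : ℝ≥0∞) ∂μ)
          ≤ ENNReal.ofReal (C * t ^ (-γ)) ∧
      μ {z | t < ∑ j ∈ Finset.range (σ z), τ j z} ≤ ENNReal.ofReal (C * t ^ (-γ)) :=
  stmt14_general μ σ hσmeas hσ1 C₁ d hC₁ hd hσtail τ hτ0 C₂ β₀ hτtail γ hγ
end

section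
/- Let (Y,μ) be a probability space and τ : Y → ℝ measurable with τ(y) ≥ 1 for a.e. y and μ(τ > t) ≤ C₀ t^{−β} for all t ≥ 1, where C₀ > 0 and β ∈ (0,1). Let ε ∈ (0,β) and r > 1 with r(β−ε) < β, and let r' = r/(r−1) be the conjugate exponent. Let R : L¹(Y;ℂ) → L¹(Y;ℂ) be a bounded linear operator with operator norm at most 1. Then there exists C > 0, depending only on C₀, β, ε, r, such that for all s₁, s₂ ∈ ℂ with Re s₁ ≥ 0 and Re s₂ ≥ 0, and all v ∈ L^{r'}(Y;ℂ), ‖R(e^{−s₁τ} v) − R(e^{−s₂τ} v)‖_{L¹} ≤ C |s₁ − s₂|^{β−ε} ‖v‖_{L^{r'}}. -/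
/-!
With `a = β - ε`, the twist `exp` is bounded by `1` and `1`-Lipschitz on the half-plane
`Re z ≤ 0`, so `|e^{-s₁τ} - e^{-s₂τ}| ≤ min 2 (|s₁ - s₂| τ) ≤ 2^{1-a} |s₁ - s₂|^a τ^a`.
Hölder's inequality with the exponents `r, r'` then bounds the `L¹` norm of the difference by
`‖τ^a‖_{L^r} ‖v‖_{L^{r'}}`, and `‖τ^a‖_{L^r}^r = E[τ^{ra}]` is controlled by the tail bound
through the layer-cake formula, since `ra < β`. Finally `R` is an `L¹` contraction.
-/

open MeasureTheory Set
open scoped ENNReal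

lemma min_le_rpow_mul_rpow {c x a : ℝ} (hc : 0 ≤ c) (hx : 0 ≤ x) (ha : 0 ≤ a) (ha1 : a ≤ 1) :
    min c x ≤ c ^ (1 - a) * x ^ a := by
  rcases le_total x c with h | h
  · calc min c x ≤ x := min_le_right _ _
      _ = x ^ (1 - a) * x ^ a := by rw [← Real.rpow_add' hx (by norm_num), sub_add_cancel,
            Real.rpow_one]
      _ ≤ c ^ (1 - a) * x ^ a := by gcongr
  · calc min c x ≤ c := min_le_left _ _
      _ = c ^ (1 - a) * c ^ a := by rw [← Real.rpow_add' hc (by norm_num), sub_add_cancel,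
            Real.rpow_one]
      _ ≤ c ^ (1 - a) * x ^ a := by gcongr

lemma norm_cexp_le_one_of_re_nonpos {z : ℂ} (hz : z.re ≤ 0) : ‖Complex.exp z‖ ≤ 1 := by
  rw [Complex.norm_exp]
  exact Real.exp_le_one_iff.mpr hz

lemma norm_cexp_sub_cexp_le_of_re_nonpos {z w : ℂ} (hz : z.re ≤ 0) (hw : w.re ≤ 0) :
    ‖Complex.exp z - Complex.exp w‖ ≤ ‖z - w‖ := by
  have := (convex_halfSpace_re_le (0 : ℝ)).norm_image_sub_le_of_norm_deriv_le
    (fun _ _ => Complex.differentiableAt_exp)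
    (fun u hu => by simpa using norm_cexp_le_one_of_re_nonpos hu) hw hz
  rwa [one_mul] at this

lemma norm_cexp_sub_cexp_le_rpow {z w : ℂ} (hz : z.re ≤ 0) (hw : w.re ≤ 0) {a : ℝ}
    (ha : 0 ≤ a) (ha1 : a ≤ 1) :
    ‖Complex.exp z - Complex.exp w‖ ≤ 2 ^ (1 - a) * ‖z - w‖ ^ a := by
  refine le_trans (le_min ?_ (norm_cexp_sub_cexp_le_of_re_nonpos hz hw))
    (min_le_rpow_mul_rpow zero_le_two (norm_nonneg _) ha ha1)
  calc ‖Complex.exp z - Complex.exp w‖ ≤ ‖Complex.exp z‖ + ‖Complex.exp w‖ := norm_sub_le _ _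
    _ ≤ 2 := by linarith [norm_cexp_le_one_of_re_nonpos hz, norm_cexp_le_one_of_re_nonpos hw]

lemma lintegral_Ioc_zero_one_rpow_sub_one {q : ℝ} (hq : 0 < q) :
    ∫⁻ t in Ioc (0 : ℝ) 1, ENNReal.ofReal (t ^ (q - 1)) = ENNReal.ofReal (1 / q) := by
  have hint : IntegrableOn (fun t : ℝ => t ^ (q - 1)) (Ioc 0 1) := by
    rw [← intervalIntegrable_iff_integrableOn_Ioc_of_le zero_le_one]
    exact intervalIntegral.intervalIntegrable_rpow' (by linarith)
  rw [← ofReal_integral_eq_lintegral_ofReal hint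
    ((ae_restrict_mem measurableSet_Ioc).mono fun t ht => Real.rpow_nonneg ht.1.le _),
    ← intervalIntegral.integral_of_le zero_le_one, integral_rpow (Or.inl (by linarith)),
    sub_add_cancel, Real.one_rpow, Real.zero_rpow hq.ne', sub_zero]

lemma lintegral_Ioi_one_rpow {p : ℝ} (hp : p < -1) :
    ∫⁻ t in Ioi (1 : ℝ), ENNReal.ofReal (t ^ p) = ENNReal.ofReal (-1 / (p + 1)) := by
  rw [← ofReal_integral_eq_lintegral_ofReal (integrableOn_Ioi_rpow_of_lt hp one_pos)
    ((ae_restrict_mem measurableSet_Ioi).mono fun t ht => Real.rpow_nonneg (one_pos.trans ht).le _),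
    integral_Ioi_rpow_of_lt hp one_pos, Real.one_rpow]

section Tail

variable {Y : Type*} [MeasurableSpace Y] {μ : Measure Y} {τ : Y → ℝ} {C₀ β : ℝ}

theorem lintegral_rpow_le_of_tail [IsProbabilityMeasure μ] {q : ℝ} (hC₀ : 0 ≤ C₀) (hq : 0 < q)
    (hqβ : q < β) (hτ : AEMeasurable τ μ) (hτ0 : ∀ᵐ y ∂μ, 0 ≤ τ y)
    (tail : ∀ t : ℝ, 1 ≤ t → μ {y | t < τ y} ≤ ENNReal.ofReal (C₀ * t ^ (-β))) :
    ∫⁻ y, ENNReal.ofReal (τ y ^ q) ∂μ ≤ ENNReal.ofReal (1 + q * (C₀ / (β - q))) := by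
  have hβq : 0 < β - q := sub_pos.mpr hqβ
  rw [lintegral_rpow_eq_lintegral_meas_lt_mul μ hτ0 hτ hq,
    ← Ioc_union_Ioi_eq_Ioi zero_le_one, lintegral_union measurableSet_Ioi (Ioc_disjoint_Ioi le_rfl)]
  have head : ∫⁻ t in Ioc (0 : ℝ) 1, μ {y | t < τ y} * ENNReal.ofReal (t ^ (q - 1))
      ≤ ENNReal.ofReal (1 / q) := by
    rw [← lintegral_Ioc_zero_one_rpow_sub_one hq]
    exact lintegral_mono fun t => mul_le_of_le_one_left' prob_le_one
  have body : ∫⁻ t in Ioi (1 : ℝ), μ {y | t < τ y} * ENNReal.ofReal (t ^ (q - 1))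
      ≤ ENNReal.ofReal (C₀ / (β - q)) := by
    calc _ ≤ ∫⁻ t in Ioi (1 : ℝ), ENNReal.ofReal C₀ * ENNReal.ofReal (t ^ (q - 1 - β)) := by
          refine setLIntegral_mono' measurableSet_Ioi fun t ht => ?_
          have ht0 : 0 < t := one_pos.trans ht
          calc _ ≤ ENNReal.ofReal (C₀ * t ^ (-β)) * ENNReal.ofReal (t ^ (q - 1)) := by
                gcongr; exact tail t ht.le
            _ = _ := by
                rw [← ENNReal.ofReal_mul (by positivity), ← ENNReal.ofReal_mul hC₀, mul_assoc,
                  ← Real.rpow_add ht0]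
                ring_nf
      _ = ENNReal.ofReal (C₀ / (β - q)) := by
          rw [lintegral_const_mul' _ _ ENNReal.ofReal_ne_top,
            lintegral_Ioi_one_rpow (by linarith), ← ENNReal.ofReal_mul hC₀]
          rw [show q - 1 - β + 1 = -(β - q) by ring, neg_div_neg_eq, mul_one_div]
  calc ENNReal.ofReal q * (_ + _)
      ≤ ENNReal.ofReal q * (ENNReal.ofReal (1 / q) + ENNReal.ofReal (C₀ / (β - q))) := by
        gcongr
    _ = ENNReal.ofReal (1 + q * (C₀ / (β - q))) := by
        rw [← ENNReal.ofReal_add (by positivity) (by positivity), ← ENNReal.ofReal_mul hq.le,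
          mul_add, mul_one_div_cancel hq.ne']

theorem eLpNorm_rpow_le_of_tail [IsProbabilityMeasure μ] {r a : ℝ} (hC₀ : 0 ≤ C₀) (hr : 0 < r)
    (ha : 0 < a) (hraβ : r * a < β) (hτ : AEMeasurable τ μ) (hτ0 : ∀ᵐ y ∂μ, 0 ≤ τ y)
    (tail : ∀ t : ℝ, 1 ≤ t → μ {y | t < τ y} ≤ ENNReal.ofReal (C₀ * t ^ (-β))) :
    eLpNorm (fun y => τ y ^ a) (ENNReal.ofReal r) μ
      ≤ ENNReal.ofReal ((1 + r * a * (C₀ / (β - r * a))) ^ (1 / r)) := by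
  rw [eLpNorm_eq_lintegral_rpow_enorm_toReal (by simpa using hr) ENNReal.ofReal_ne_top,
    ENNReal.toReal_ofReal hr.le]
  have hpow : ∫⁻ y, ‖τ y ^ a‖ₑ ^ r ∂μ = ∫⁻ y, ENNReal.ofReal (τ y ^ (r * a)) ∂μ := by
    refine lintegral_congr_ae (hτ0.mono fun y hy => ?_)
    beta_reduce
    rw [Real.enorm_eq_ofReal (Real.rpow_nonneg hy _),
      ENNReal.ofReal_rpow_of_nonneg (Real.rpow_nonneg hy _) hr.le, ← Real.rpow_mul hy, mul_comm]
  have hβ : 0 < β - r * a := by linarith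
  rw [hpow, ← ENNReal.ofReal_rpow_of_nonneg (by positivity) (by positivity)]
  gcongr
  exact lintegral_rpow_le_of_tail hC₀ (by positivity) hraβ hτ hτ0 tail

lemma eLpNorm_cexp_sub_cexp_le {s₁ s₂ : ℂ} (hs₁ : 0 ≤ s₁.re) (hs₂ : 0 ≤ s₂.re)
    (hτ0 : ∀ᵐ y ∂μ, 0 ≤ τ y) {a : ℝ} (ha : 0 ≤ a) (ha1 : a ≤ 1) (p : ℝ≥0∞) :
    eLpNorm (fun y => Complex.exp (-s₁ * τ y) - Complex.exp (-s₂ * τ y)) p μ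
      ≤ ENNReal.ofReal (2 ^ (1 - a) * ‖s₁ - s₂‖ ^ a) * eLpNorm (fun y => τ y ^ a) p μ := by
  refine eLpNorm_le_mul_eLpNorm_of_ae_le_mul (hτ0.mono fun y hy => ?_) p
  have hre : ∀ s : ℂ, 0 ≤ s.re → (-s * τ y).re ≤ 0 := fun s hs => by
    simpa using mul_nonneg hs hy
  calc _ ≤ 2 ^ (1 - a) * ‖-s₁ * τ y - -s₂ * τ y‖ ^ a :=
        norm_cexp_sub_cexp_le_rpow (hre s₁ hs₁) (hre s₂ hs₂) ha ha1
    _ = 2 ^ (1 - a) * ‖s₁ - s₂‖ ^ a * ‖τ y ^ a‖ := by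
        rw [← sub_mul, ← neg_sub', neg_mul, norm_neg, norm_mul, Complex.norm_real,
          Real.norm_of_nonneg hy, Real.norm_of_nonneg (Real.rpow_nonneg hy _),
          Real.mul_rpow (norm_nonneg _) hy, mul_assoc]

lemma eLpNorm_cexp_mul_sub_cexp_mul_le {p q : ℝ≥0∞} [p.HolderConjugate q] {s₁ s₂ : ℂ}
    (hs₁ : 0 ≤ s₁.re) (hs₂ : 0 ≤ s₂.re) (hτ : AEMeasurable τ μ) (hτ0 : ∀ᵐ y ∂μ, 0 ≤ τ y) {a : ℝ}
    (ha : 0 ≤ a) (ha1 : a ≤ 1) {v : Y → ℂ} (hv : AEStronglyMeasurable v μ) :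
    eLpNorm ((fun y => Complex.exp (-s₁ * τ y) * v y) - fun y => Complex.exp (-s₂ * τ y) * v y)
        1 μ
      ≤ ENNReal.ofReal (2 ^ (1 - a) * ‖s₁ - s₂‖ ^ a) * eLpNorm (fun y => τ y ^ a) p μ
        * eLpNorm v q μ := by
  have hfactor : ((fun y => Complex.exp (-s₁ * τ y) * v y) - fun y => Complex.exp (-s₂ * τ y) * v y)
      = (fun y => Complex.exp (-s₁ * τ y) - Complex.exp (-s₂ * τ y)) • v := by
    ext y
    simp [sub_mul]
  rw [hfactor]
  refine (eLpNorm_smul_le_mul_eLpNorm (p := p) (q := q) hv (by fun_prop)).trans ?_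
  gcongr
  exact eLpNorm_cexp_sub_cexp_le hs₁ hs₂ hτ0 ha ha1 p

end Tail

theorem stmt15 (C₀ β ε r : ℝ) (hC₀ : 0 < C₀) (hβ : β ∈ Set.Ioo (0:ℝ) 1)
    (hε : ε ∈ Set.Ioo 0 β) (hr : 1 < r) (hrβ : r * (β - ε) < β) :
    ∃ C : ℝ, 0 < C ∧
      ∀ (Y : Type) [MeasurableSpace Y] (μ : Measure Y) [IsProbabilityMeasure μ]
        (τ : Y → ℝ), Measurable τ → (∀ᵐ y ∂μ, 1 ≤ τ y) →
      (∀ t : ℝ, 1 ≤ t → μ {y | t < τ y} ≤ ENNReal.ofReal (C₀ * t ^ (-β))) →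
      ∀ R : Lp ℂ 1 μ →L[ℂ] Lp ℂ 1 μ, ‖R‖ ≤ 1 →
      ∀ s₁ s₂ : ℂ, 0 ≤ s₁.re → 0 ≤ s₂.re →
      ∀ v : Y → ℂ, MemLp v (ENNReal.ofReal (r / (r - 1))) μ →
      ∀ h₁ : MemLp (fun y => Complex.exp (-s₁ * (τ y : ℂ)) * v y) 1 μ,
      ∀ h₂ : MemLp (fun y => Complex.exp (-s₂ * (τ y : ℂ)) * v y) 1 μ,
      ‖R (MemLp.toLp _ h₁) - R (MemLp.toLp _ h₂)‖ ≤
        C * ‖s₁ - s₂‖ ^ (β - ε) *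
          (eLpNorm v (ENNReal.ofReal (r / (r - 1))) μ).toReal := by
  obtain ⟨-, hβ1⟩ := hβ
  obtain ⟨hε0, hεβ⟩ := hε
  set a := β - ε
  have ha : 0 < a := by linarith
  have hgap : 0 < β - r * a := by linarith
  set M := (1 + r * a * (C₀ / (β - r * a))) ^ (1 / r)
  have hM : 0 < M := by positivity
  refine ⟨2 ^ (1 - a) * M, by positivity, ?_⟩
  intro Y _ μ _ τ hτ hτ1 tail R hR s₁ s₂ hs₁ hs₂ v hv h₁ h₂
  have hτ0 : ∀ᵐ y ∂μ, 0 ≤ τ y := hτ1.mono fun _ h => zero_le_one.trans h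
  have : (ENNReal.ofReal r).HolderConjugate (ENNReal.ofReal (r / (r - 1))) :=
    (Real.HolderConjugate.conjExponent hr).ennrealOfReal
  have hdiff := eLpNorm_cexp_mul_sub_cexp_mul_le (p := ENNReal.ofReal r)
    (q := ENNReal.ofReal (r / (r - 1))) hs₁ hs₂ hτ.aemeasurable
    hτ0 ha.le (by linarith) hv.1
  have hmoment := eLpNorm_rpow_le_of_tail hC₀.le (by linarith) ha hrβ
    hτ.aemeasurable hτ0 tail
  calc ‖R (MemLp.toLp _ h₁) - R (MemLp.toLp _ h₂)‖
      ≤ ‖MemLp.toLp _ h₁ - MemLp.toLp _ h₂‖ := by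
        rw [← map_sub]
        exact (R.le_of_opNorm_le hR _).trans_eq (one_mul _)
    _ = (eLpNorm ((fun y => Complex.exp (-s₁ * τ y) * v y)
          - fun y => Complex.exp (-s₂ * τ y) * v y) 1 μ).toReal := by
        rw [← MemLp.toLp_sub, Lp.norm_toLp]
    _ ≤ (ENNReal.ofReal (2 ^ (1 - a) * ‖s₁ - s₂‖ ^ a) * ENNReal.ofReal M
          * eLpNorm v (ENNReal.ofReal (r / (r - 1))) μ).toReal := by
        refine ENNReal.toReal_mono (by finiteness [hv.2.ne]) (hdiff.trans ?_)
        gcongr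
    _ = 2 ^ (1 - a) * M * ‖s₁ - s₂‖ ^ a * (eLpNorm v (ENNReal.ofReal (r / (r - 1))) μ).toReal := by
        rw [ENNReal.toReal_mul, ENNReal.toReal_mul, ENNReal.toReal_ofReal (by positivity),
          ENNReal.toReal_ofReal hM.le]
        ring
end

section
/- Let β ∈ (1/2,1), ε ∈ (0,β), δ > 0, K > 0, and let g : (0,δ] → ℂ be continuous satisfying: (i) |g(b)| ≤ K b^{−β} for all b ∈ (0,δ]; and (ii) |g(b+h) − g(b)| ≤ K b^{−2β} h^{β−ε} whenever 0 < h < b and b + h ≤ δ. Then there exists C > 0, depending only on β, ε, δ, K, such that for all a > π and all t ≥ 1 with t > (a+π)/δ, one has |∫_{a/t}^{δ} e^{ibt} g(b) db| ≤ C t^{−(1−β−ε)} a^{−(2β−1)}. -/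
open MeasureTheory Real

set_option maxHeartbeats 2000000

theorem stmt16 (β ε δ K : ℝ) (hβ : β ∈ Set.Ioo (1/2 : ℝ) 1) (hε : ε ∈ Set.Ioo 0 β)
    (hδ : 0 < δ) (hK : 0 < K) :
    ∃ C : ℝ, 0 < C ∧
      ∀ g : ℝ → ℂ, ContinuousOn g (Set.Ioc 0 δ) →
      (∀ b ∈ Set.Ioc (0:ℝ) δ, ‖g b‖ ≤ K * b ^ (-β)) →
      (∀ b h : ℝ, 0 < h → h < b → b + h ≤ δ →
        ‖g (b + h) - g b‖ ≤ K * (b ^ (-(2*β)) * h ^ (β - ε))) →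
      ∀ a t : ℝ, π < a → 1 ≤ t → (a + π) / δ < t →
        ‖∫ b in (a/t)..δ, Complex.exp (Complex.I * (b:ℂ) * (t:ℂ)) * g b‖ ≤
          C * t ^ (-(1 - β - ε)) * a ^ (-(2*β - 1)) := by
  obtain ⟨hβ1, hβ2⟩ := hβ
  obtain ⟨hε1, hε2⟩ := hε
  have hπ := Real.pi_pos
  have h2β : (0:ℝ) < 2*β - 1 := by linarith
  set C : ℝ := K * π ^ β + K * (δ/2) ^ (-β) * π * δ ^ (2*β - 1) + K * π ^ (β - ε) / (2*β - 1)
    with hC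
  have hC1 : 0 < K * π ^ β := by positivity
  have hC2 : 0 < K * (δ/2) ^ (-β) * π * δ ^ (2*β - 1) := by positivity
  have hC3 : 0 < K * π ^ (β - ε) / (2*β - 1) := div_pos (by positivity) h2β
  refine ⟨C, by positivity, ?_⟩
  intro g hg hg1 hg2 a t ha ht hts
  have ht0 : (0:ℝ) < t := lt_of_lt_of_le one_pos ht
  have ha0 : (0:ℝ) < a := hπ.trans ha
  have haδt : a + π < δ * t := by
    have := (div_lt_iff₀ hδ).mp hts; nlinarith
  have hl1δ : (a + π)/t < δ := by rw [div_lt_iff₀ ht0]; linarith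
  have hs0 : (0:ℝ) < π/t := div_pos hπ ht0
  have hl0 : (0:ℝ) < a/t := div_pos ha0 ht0
  have hsl0 : π/t < a/t := by gcongr
  have hl01 : a/t < (a+π)/t := by gcongr; linarith
  have hl0δ : a/t < δ := hl01.trans hl1δ
  have hsum : a/t + π/t = (a+π)/t := by ring
  have hsδ2 : π/t < δ/2 := by
    have h1 : π/t + π/t < a/t + π/t := by linarith
    rw [hsum] at h1
    linarith [h1.trans hl1δ]
  have hδs : δ/2 < δ - π/t := by linarith
  have hl0δs : a/t < δ - π/t := by
    have : a/t + π/t < δ := by rw [hsum]; exact hl1δ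
    linarith
  -- the integrand and its shifted version
  set f : ℝ → ℂ := fun b => Complex.exp (Complex.I * (b:ℂ) * (t:ℂ)) * g b with hf
  set f2 : ℝ → ℂ := fun b => Complex.exp (Complex.I * (b:ℂ) * (t:ℂ)) * g (b - π/t) with hf2
  have hexpc : Continuous fun b : ℝ => Complex.exp (Complex.I * (b:ℂ) * (t:ℂ)) := by
    exact Complex.continuous_exp.comp (by continuity)
  have hexp1 : ∀ x : ℝ, ‖Complex.exp (Complex.I * (x:ℂ) * (t:ℂ))‖ = 1 := by
    intro x
    rw [show Complex.I * (x:ℂ) * (t:ℂ) = ((x*t : ℝ):ℂ) * Complex.I by push_cast; ring]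
    exact Complex.norm_exp_ofReal_mul_I _
  have hfc : ContinuousOn f (Set.Ioc 0 δ) := (hexpc.continuousOn).mul hg
  have hf2c : ContinuousOn f2 (Set.Icc ((a+π)/t) (δ + π/t)) := by
    apply (hexpc.continuousOn).mul
    apply hg.comp (by fun_prop)
    intro x hx
    obtain ⟨hx1, hx2⟩ := hx
    rw [← hsum] at hx1
    exact ⟨by linarith, by linarith⟩
  have hIcc1 : Set.Icc (a/t) δ ⊆ Set.Ioc 0 δ := fun x hx => ⟨hl0.trans_le hx.1, hx.2⟩
  have hint : ∀ u v : ℝ, a/t ≤ u → u ≤ v → v ≤ δ → IntervalIntegrable f volume u v := by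
    intro u v hu huv hv
    apply ContinuousOn.intervalIntegrable
    rw [Set.uIcc_of_le huv]
    exact (hfc.mono hIcc1).mono (Set.Icc_subset_Icc hu hv)
  have hint2 : IntervalIntegrable f2 volume ((a+π)/t) δ := by
    apply ContinuousOn.intervalIntegrable
    rw [Set.uIcc_of_le hl1δ.le]
    exact hf2c.mono (Set.Icc_subset_Icc le_rfl (by linarith))
  have hint2' : IntervalIntegrable f2 volume δ (δ + π/t) := by
    apply ContinuousOn.intervalIntegrable
    rw [Set.uIcc_of_le (by linarith : δ ≤ δ + π/t)]
    exact hf2c.mono (Set.Icc_subset_Icc hl1δ.le le_rfl)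
  have htc : (t:ℂ) ≠ 0 := by exact_mod_cast ht0.ne'
  -- substitution b ↦ b - π/t and e^{iπ} = -1
  have hsub : (∫ b in ((a+π)/t)..(δ + π/t), f2 b) = - ∫ b in (a/t)..δ, f b := by
    have h1 : ∀ x : ℝ, f2 x = - f (x - π/t) := by
      intro x
      have hex : Complex.exp (Complex.I * ((x - π/t : ℝ):ℂ) * (t:ℂ))
          = - Complex.exp (Complex.I * (x:ℂ) * (t:ℂ)) := by
        rw [show Complex.I * ((x - π/t : ℝ):ℂ) * (t:ℂ)
            = Complex.I * (x:ℂ) * (t:ℂ) - (π:ℝ) * Complex.I by push_cast; field_simp]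
        rw [Complex.exp_sub, Complex.exp_pi_mul_I]
        field_simp
      simp only [hf, hf2, hex]
      ring
    have e1 : (a+π)/t - π/t = a/t := by ring
    have e2 : δ + π/t - π/t = δ := by ring
    calc (∫ b in ((a+π)/t)..(δ + π/t), f2 b)
        = ∫ b in ((a+π)/t)..(δ + π/t), - f (b - π/t) := by simp_rw [h1]
      _ = - ∫ b in ((a+π)/t)..(δ + π/t), f (b - π/t) := intervalIntegral.integral_neg
      _ = - ∫ b in ((a+π)/t - π/t)..(δ + π/t - π/t), f b := by
            rw [intervalIntegral.integral_comp_sub_right]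
      _ = - ∫ b in (a/t)..δ, f b := by rw [e1, e2]
  -- split and recombine
  have hA : (∫ b in (a/t)..δ, f b)
      = (∫ b in (a/t)..((a+π)/t), f b) + ∫ b in ((a+π)/t)..δ, f b :=
    (intervalIntegral.integral_add_adjacent_intervals
      (hint _ _ le_rfl hl01.le hl1δ.le) (hint _ _ hl01.le hl1δ.le le_rfl)).symm
  have hB : (∫ b in ((a+π)/t)..(δ + π/t), f2 b)
      = (∫ b in ((a+π)/t)..δ, f2 b) + ∫ b in δ..(δ + π/t), f2 b :=
    (intervalIntegral.integral_add_adjacent_intervals hint2 hint2').symm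
  have hD : (∫ b in ((a+π)/t)..δ, (f b - f2 b))
      = (∫ b in ((a+π)/t)..δ, f b) - ∫ b in ((a+π)/t)..δ, f2 b :=
    intervalIntegral.integral_sub (hint _ _ hl01.le hl1δ.le le_rfl) hint2
  have hkey : (2:ℂ) * (∫ b in (a/t)..δ, f b)
      = (∫ b in (a/t)..((a+π)/t), f b)
        + (∫ b in ((a+π)/t)..δ, (f b - f2 b))
        - ∫ b in δ..(δ + π/t), f2 b := by
    rw [hD]
    rw [hB] at hsub
    linear_combination hA + hsub
  set T : ℝ := t ^ (β+ε-1) * a ^ (1-2*β) with hT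
  have hT0 : 0 < T := by positivity
  -- bound on A
  have hbA : ‖∫ b in (a/t)..((a+π)/t), f b‖ ≤ K * π ^ β * T := by
    have h1 : ∀ x ∈ Set.uIoc (a/t) ((a+π)/t), ‖f x‖ ≤ K * (a/t) ^ (-β) := by
      intro x hx
      rw [Set.uIoc_of_le hl01.le] at hx
      have hx0 : a/t < x := hx.1
      have hxδ : x ≤ δ := hx.2.trans hl1δ.le
      calc ‖f x‖ = ‖g x‖ := by simp only [hf, norm_mul, hexp1, one_mul]
        _ ≤ K * x ^ (-β) := hg1 x ⟨hl0.trans hx0, hxδ⟩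
        _ ≤ K * (a/t) ^ (-β) := by
            exact mul_le_mul_of_nonneg_left
              (Real.rpow_le_rpow_of_nonpos hl0 hx0.le (by linarith)) hK.le
    have h2 := intervalIntegral.norm_integral_le_of_norm_le_const h1
    have h3 : (a+π)/t - a/t = π/t := by ring
    rw [h3, abs_of_pos hs0] at h2
    refine h2.trans ?_
    have e1 : (a/t)^(-β) = a^(-β) * t^β := by
      rw [Real.div_rpow ha0.le ht0.le, Real.rpow_neg ht0.le, div_inv_eq_mul]
    have e2 : a^(-β) = a^(β-1) * a^(1-2*β) := by
      rw [← Real.rpow_add ha0]; congr 1; ring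
    have et : t^β = t^(β-1) * t := by
      rw [← Real.rpow_add_one ht0.ne']; congr 1; ring
    have eπ : π^β = π^(β-1) * π := by
      rw [← Real.rpow_add_one hπ.ne']; congr 1; ring
    have e3 : a^(β-1) ≤ π^(β-1) :=
      Real.rpow_le_rpow_of_nonpos hπ ha.le (by linarith)
    have e4 : t^(β-1) ≤ t^(β+ε-1) :=
      Real.rpow_le_rpow_of_exponent_le ht (by linarith)
    calc K * (a/t)^(-β) * (π/t)
        = K * π * (a^(β-1) * t^(β-1)) * a^(1-2*β) := by
          rw [e1, e2, et]; field_simp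
      _ ≤ K * π * (π^(β-1) * t^(β+ε-1)) * a^(1-2*β) := by
          gcongr
      _ = K * π^β * T := by rw [eπ, hT]; ring
  -- bound on B
  have hscalB : (1:ℝ)/t ≤ δ^(2*β-1) * T := by
    have h1 : (δ*t)^(1-2*β) ≤ a^(1-2*β) :=
      Real.rpow_le_rpow_of_nonpos ha0 (by linarith) (by linarith)
    have h2 : (δ*t)^(1-2*β) = δ^(1-2*β) * t^(1-2*β) := Real.mul_rpow hδ.le ht0.le
    have h3 : δ^(2*β-1) * δ^(1-2*β) = 1 := by
      rw [← Real.rpow_add hδ]; norm_num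
    have h4 : t^(β+ε-1) * t^(1-2*β) = t^(ε-β) := by
      rw [← Real.rpow_add ht0]; congr 1; ring
    have h5 : t^(-1:ℝ) ≤ t^(ε-β) :=
      Real.rpow_le_rpow_of_exponent_le ht (by linarith)
    have h6 : t^(-1:ℝ) = 1/t := by rw [Real.rpow_neg_one, one_div]
    calc (1:ℝ)/t = t^(-1:ℝ) := h6.symm
      _ ≤ t^(ε-β) := h5
      _ = δ^(2*β-1) * δ^(1-2*β) * (t^(β+ε-1) * t^(1-2*β)) := by rw [h3, h4]; ring
      _ = δ^(2*β-1) * t^(β+ε-1) * ((δ*t)^(1-2*β)) := by rw [h2]; ring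
      _ ≤ δ^(2*β-1) * t^(β+ε-1) * a^(1-2*β) :=
          mul_le_mul_of_nonneg_left h1 (by positivity)
      _ = δ^(2*β-1) * T := by rw [hT]; ring
  have hbB : ‖∫ b in δ..(δ + π/t), f2 b‖ ≤ K * (δ/2)^(-β) * π * δ^(2*β-1) * T := by
    have h1 : ∀ x ∈ Set.uIoc δ (δ + π/t), ‖f2 x‖ ≤ K * (δ/2) ^ (-β) := by
      intro x hx
      rw [Set.uIoc_of_le (by linarith : δ ≤ δ + π/t)] at hx
      have hx1 : δ/2 < x - π/t := by linarith [hx.1]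
      have hx2 : x - π/t ≤ δ := by linarith [hx.2]
      calc ‖f2 x‖ = ‖g (x - π/t)‖ := by simp only [hf2, norm_mul, hexp1, one_mul]
        _ ≤ K * (x - π/t) ^ (-β) := hg1 _ ⟨by linarith, hx2⟩
        _ ≤ K * (δ/2) ^ (-β) :=
            mul_le_mul_of_nonneg_left
              (Real.rpow_le_rpow_of_nonpos (by positivity) hx1.le (by linarith)) hK.le
    have h2 := intervalIntegral.norm_integral_le_of_norm_le_const h1
    have h3 : δ + π/t - δ = π/t := by ring
    rw [h3, abs_of_pos hs0] at h2
    refine h2.trans ?_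
    calc K * (δ/2)^(-β) * (π/t) = K * (δ/2)^(-β) * π * (1/t) := by ring
      _ ≤ K * (δ/2)^(-β) * π * (δ^(2*β-1) * T) :=
          mul_le_mul_of_nonneg_left hscalB (by positivity)
      _ = K * (δ/2)^(-β) * π * δ^(2*β-1) * T := by ring
  -- bound on D
  have hbD : ‖∫ b in ((a+π)/t)..δ, (f b - f2 b)‖ ≤ K * π^(β-ε)/(2*β-1) * T := by
    have hfcD : ContinuousOn (fun x => f x - f2 x) (Set.Icc ((a+π)/t) δ) := by
      apply ContinuousOn.sub
      · exact (hfc.mono hIcc1).mono (Set.Icc_subset_Icc hl01.le le_rfl)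
      · exact hf2c.mono (Set.Icc_subset_Icc le_rfl (by linarith))
    have hpt : ∀ x ∈ Set.Icc ((a+π)/t) δ,
        ‖f x - f2 x‖ ≤ K * (π/t)^(β-ε) * (x - π/t)^(-(2*β)) := by
      intro x hx
      obtain ⟨hx1, hx2⟩ := hx
      rw [← hsum] at hx1
      have hb : π/t < x - π/t := by linarith
      have h0 : a/t ≤ x - π/t := by linarith
      have := hg2 (x - π/t) (π/t) hs0 hb (by linarith)
      rw [sub_add_cancel] at this
      calc ‖f x - f2 x‖ = ‖g x - g (x - π/t)‖ := by
            simp only [hf, hf2, ← mul_sub, norm_mul, hexp1, one_mul]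
        _ ≤ K * ((x - π/t) ^ (-(2*β)) * (π/t) ^ (β-ε)) := this
        _ = K * (π/t)^(β-ε) * (x - π/t)^(-(2*β)) := by ring
    have hintnorm : IntervalIntegrable (fun x => ‖f x - f2 x‖) volume ((a+π)/t) δ := by
      apply ContinuousOn.intervalIntegrable
      rw [Set.uIcc_of_le hl1δ.le]
      exact hfcD.norm
    have hintcmp : IntervalIntegrable
        (fun x => K * (π/t)^(β-ε) * (x - π/t)^(-(2*β))) volume ((a+π)/t) δ := by
      apply ContinuousOn.intervalIntegrable
      rw [Set.uIcc_of_le hl1δ.le]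
      apply ContinuousOn.mul continuousOn_const
      apply ContinuousOn.rpow_const (by fun_prop)
      intro x hx
      left
      rw [← hsum] at hx
      have h0 : a/t ≤ x - π/t := by linarith [hx.1]
      exact (hl0.trans_le h0).ne'
    have step1 : ‖∫ b in ((a+π)/t)..δ, (f b - f2 b)‖
        ≤ ∫ x in ((a+π)/t)..δ, ‖f x - f2 x‖ :=
      intervalIntegral.norm_integral_le_integral_norm hl1δ.le
    have step2 : (∫ x in ((a+π)/t)..δ, ‖f x - f2 x‖)
        ≤ ∫ x in ((a+π)/t)..δ, K * (π/t)^(β-ε) * (x - π/t)^(-(2*β)) :=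
      intervalIntegral.integral_mono_on hl1δ.le hintnorm hintcmp hpt
    have e1 : (a+π)/t - π/t = a/t := by ring
    have hval : (∫ x in ((a+π)/t)..δ, K * (π/t)^(β-ε) * (x - π/t)^(-(2*β)))
        = K * (π/t)^(β-ε)
          * (((δ - π/t)^(-(2*β)+1) - (a/t)^(-(2*β)+1)) / (-(2*β)+1)) := by
      rw [intervalIntegral.integral_const_mul]
      congr 1
      rw [intervalIntegral.integral_comp_sub_right (fun u => u^(-(2*β))) (π/t), e1]
      rw [integral_rpow]
      right
      constructor
      · intro h; rw [show (-1:ℝ) = -1 by norm_num] at h; nlinarith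
      · rw [Set.uIcc_of_le hl0δs.le]
        intro hmem
        exact absurd hmem.1 (by linarith)
    have hval2 : ((δ - π/t)^(-(2*β)+1) - (a/t)^(-(2*β)+1)) / (-(2*β)+1)
        ≤ (a/t)^(1-2*β) / (2*β-1) := by
      have hp : (0:ℝ) ≤ (δ - π/t)^(-(2*β)+1) :=
        Real.rpow_nonneg (by linarith : (0:ℝ) ≤ δ - π/t) _
      have hne1 : (-(2*β)+1 : ℝ) ≠ 0 := by linarith
      have hne2 : (2*β-1 : ℝ) ≠ 0 := h2β.ne'
      have hineq : ((δ - π/t)^(-(2*β)+1) - (a/t)^(-(2*β)+1)) / (-(2*β)+1)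
          = ((a/t)^(-(2*β)+1) - (δ - π/t)^(-(2*β)+1)) / (2*β-1) := by
        field_simp
        ring
      rw [hineq, show (1-2*β : ℝ) = -(2*β)+1 by ring]
      exact div_le_div_of_nonneg_right (by linarith [hp]) h2β.le
    have eπt : (π/t)^(β-ε) = π^(β-ε) * t^(ε-β) := by
      rw [show (ε-β:ℝ) = -(β-ε) by ring, Real.rpow_neg ht0.le,
        Real.div_rpow hπ.le ht0.le, div_eq_mul_inv]
    have eat : (a/t)^(1-2*β) = a^(1-2*β) * t^(2*β-1) := by
      rw [show (2*β-1:ℝ) = -(1-2*β) by ring, Real.rpow_neg ht0.le,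
        Real.div_rpow ha0.le ht0.le, div_eq_mul_inv]
    have ett : t^(ε-β) * t^(2*β-1) = t^(β+ε-1) := by
      rw [← Real.rpow_add ht0]; congr 1; ring
    calc ‖∫ b in ((a+π)/t)..δ, (f b - f2 b)‖
        ≤ ∫ x in ((a+π)/t)..δ, K * (π/t)^(β-ε) * (x - π/t)^(-(2*β)) := step1.trans step2
      _ = K * (π/t)^(β-ε)
          * (((δ - π/t)^(-(2*β)+1) - (a/t)^(-(2*β)+1)) / (-(2*β)+1)) := hval
      _ ≤ K * (π/t)^(β-ε) * ((a/t)^(1-2*β) / (2*β-1)) :=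
          mul_le_mul_of_nonneg_left hval2 (by positivity)
      _ = K * π^(β-ε)/(2*β-1) * T := by
          rw [eπt, eat, hT, ← ett]; ring
  -- conclusion
  rw [show -(1-β-ε) = β+ε-1 by ring, show -(2*β-1) = 1-2*β by ring]
  have h2n : (2:ℝ) * ‖∫ b in (a/t)..δ, f b‖ = ‖(2:ℂ) * ∫ b in (a/t)..δ, f b‖ := by
    rw [norm_mul]; norm_num
  have hsplit : ‖(2:ℂ) * ∫ b in (a/t)..δ, f b‖
      ≤ ‖∫ b in (a/t)..((a+π)/t), f b‖ + ‖∫ b in ((a+π)/t)..δ, (f b - f2 b)‖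
        + ‖∫ b in δ..(δ + π/t), f2 b‖ := by
    rw [hkey]
    exact (norm_sub_le _ _).trans (by gcongr; exact norm_add_le _ _)
  have hfin : (2:ℝ) * ‖∫ b in (a/t)..δ, f b‖ ≤ C * T := by
    rw [h2n]
    refine hsplit.trans ?_
    have := add_le_add (add_le_add hbA hbD) hbB
    have hCeq : K * π ^ β * T + K * π^(β-ε)/(2*β-1) * T
        + K * (δ/2)^(-β) * π * δ^(2*β-1) * T = C * T := by rw [hC]; ring
    linarith
  have hgoal : C * t^(β+ε-1) * a^(1-2*β) = C * T := by rw [hT]; ring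
  rw [hgoal]
  linarith [norm_nonneg (∫ b in (a/t)..δ, f b)]
end

section
/- Let (X,μ) be a finite measure space, f : X → X measurable, τ₀ : X → ℝ measurable, and let d_* > 0 and q ∈ (0,1). For n ≥ 1 define: X_q(n) = { x ∈ X : ⌊τ₀(x)⌋ = n and τ₀(f^j x) ≥ n^{1−q} for some integer j with 1 ≤ j < d_* log n }; X_q^+(n) = { x ∈ X : ⌊τ₀(x)⌋ ≥ n and τ₀(f^j x) ≥ n^{1−q} for some integer j with 1 ≤ j < d_* log n }; X_q'(n) = { x ∈ X : ⌊τ₀(x)⌋ ≥ n and τ₀(f^j x) ≥ n^{1−q} for some integer j with d_* log n ≤ j < d_* log(n+1) }. Suppose there exist C > 0, β > 0 and p ∈ (0,1) such that μ(X_q^+(n)) ≤ C n^{−(β+p)} and μ(X_q'(n)) ≤ C n^{−(β+p)} for all n ≥ 1. Then Σ_{n≥1} n^{β'} μ(X_q(n)) < ∞ for every β' ∈ (β, β+p). -/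
open MeasureTheory
open scoped ENNReal

/-- The set `X_q(n)`: integer part of `τ₀` equals `n` and some iterate `j` with
`1 ≤ j < d_* log n` has `τ₀(f^j x) ≥ n^{1-q}`. -/
def Xq {X : Type*} (f : X → X) (τ₀ : X → ℝ) (dstar q : ℝ) (n : ℕ) : Set X :=
  {x | ⌊τ₀ x⌋ = (n : ℤ) ∧
    ∃ j : ℕ, 1 ≤ j ∧ (j : ℝ) < dstar * Real.log n ∧ (n : ℝ) ^ (1 - q) ≤ τ₀ (f^[j] x)}

/-- The set `X_q^+(n)`: integer part of `τ₀` at least `n` and some iterate `j` with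
`1 ≤ j < d_* log n` has `τ₀(f^j x) ≥ n^{1-q}`. -/
def XqPlus {X : Type*} (f : X → X) (τ₀ : X → ℝ) (dstar q : ℝ) (n : ℕ) : Set X :=
  {x | (n : ℤ) ≤ ⌊τ₀ x⌋ ∧
    ∃ j : ℕ, 1 ≤ j ∧ (j : ℝ) < dstar * Real.log n ∧ (n : ℝ) ^ (1 - q) ≤ τ₀ (f^[j] x)}

/-- The set `X_q'(n)`: integer part of `τ₀` at least `n` and some iterate `j` with
`d_* log n ≤ j < d_* log (n+1)` has `τ₀(f^j x) ≥ n^{1-q}`. -/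
def XqPrime {X : Type*} (f : X → X) (τ₀ : X → ℝ) (dstar q : ℝ) (n : ℕ) : Set X :=
  {x | (n : ℤ) ≤ ⌊τ₀ x⌋ ∧
    ∃ j : ℕ, dstar * Real.log n ≤ (j : ℝ) ∧ (j : ℝ) < dstar * Real.log (n + 1) ∧
      (n : ℝ) ^ (1 - q) ≤ τ₀ (f^[j] x)}

section Auxiliary

/-- MVT bound: `(a+1)^r - a^r ≤ 2 r (a+1)^(r-1)` for `a ≥ 1`, `r > 0`. -/
lemma mvt_rpow_bound {r : ℝ} (hr : 0 < r) {a : ℝ} (ha : 1 ≤ a) :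
    (a + 1) ^ r - a ^ r ≤ 2 * r * (a + 1) ^ (r - 1) := by
  have ha0 : (0:ℝ) < a := lt_of_lt_of_le one_pos ha
  obtain ⟨c, hc, hceq⟩ := exists_hasDerivAt_eq_slope (fun x => x ^ r)
      (fun x => r * x ^ (r - 1)) (by linarith : a < a + 1)
      (fun x hx => by
        have hx0 : x ≠ 0 := by
          have : (0:ℝ) < x := lt_of_lt_of_le ha0 hx.1
          exact ne_of_gt this
        exact (Real.continuousAt_rpow_const x r (Or.inl hx0)).continuousWithinAt)
      (fun x hx => Real.hasDerivAt_rpow_const (Or.inl (by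
        have : (0:ℝ) < x := lt_of_lt_of_le one_pos (le_trans ha (le_of_lt hx.1))
        exact ne_of_gt this)))
  have hc0 : (0:ℝ) < c := lt_of_le_of_lt ha0.le hc.1
  have hslope : (a + 1) ^ r - a ^ r = r * c ^ (r - 1) := by
    rw [hceq]; ring_nf
  rw [hslope]
  have hbound : c ^ (r - 1) ≤ 2 * (a + 1) ^ (r - 1) := by
    rcases le_or_gt 1 r with h1 | h1
    · have : c ^ (r - 1) ≤ (a + 1) ^ (r - 1) :=
        Real.rpow_le_rpow hc0.le hc.2.le (by linarith)
      nlinarith [Real.rpow_nonneg (by linarith : (0:ℝ) ≤ a + 1) (r - 1)]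
    · have h2 : c ^ (r - 1) ≤ a ^ (r - 1) :=
        Real.rpow_le_rpow_of_nonpos ha0 hc.1.le (by linarith)
      have h3 : a ^ (r - 1) ≤ ((a + 1) / 2) ^ (r - 1) :=
        Real.rpow_le_rpow_of_nonpos (by linarith) (by linarith) (by linarith)
      have h4 : ((a + 1) / 2) ^ (r - 1) = (a + 1) ^ (r - 1) * ((2:ℝ) ^ (r-1))⁻¹ := by
        rw [Real.div_rpow (by linarith) (by norm_num), div_eq_mul_inv]
      have h5 : ((2:ℝ) ^ (r-1))⁻¹ = (2:ℝ) ^ (1 - r) := by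
        rw [← Real.rpow_neg (by norm_num)]; ring_nf
      have h6 : (2:ℝ) ^ (1 - r) ≤ 2 := by
        calc (2:ℝ) ^ (1 - r) ≤ (2:ℝ) ^ (1:ℝ) :=
              Real.rpow_le_rpow_of_exponent_le (by norm_num) (by linarith)
        _ = 2 := Real.rpow_one 2
      calc c ^ (r-1) ≤ (a + 1) ^ (r - 1) * (2:ℝ) ^ (1 - r) := by
            rw [← h5, ← h4]; exact le_trans h2 h3
      _ ≤ (a + 1) ^ (r-1) * 2 :=
            mul_le_mul_of_nonneg_left h6 (Real.rpow_nonneg (by linarith) _)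
      _ = 2 * (a + 1) ^ (r-1) := by ring
  nlinarith [hbound]

/-- `⌊x⌋₊ ≥ x/2` for `x ≥ 1`. -/
lemma floor_ge_half {x : ℝ} (hx : 1 ≤ x) : x / 2 ≤ (⌊x⌋₊ : ℝ) := by
  have h1 : (1:ℝ) ≤ (⌊x⌋₊ : ℝ) := by
    exact_mod_cast Nat.one_le_cast.mpr (Nat.le_floor (by exact_mod_cast hx))
  rcases le_or_gt x 2 with h | h
  · linarith
  · have := Nat.sub_one_lt_floor x
    linarith

/-- Measurability of `Xq`. -/
lemma measurable_Xq {X : Type*} [MeasurableSpace X] (f : X → X) (hf : Measurable f)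
    (τ₀ : X → ℝ) (hτ₀ : Measurable τ₀) (dstar q : ℝ) (n : ℕ) :
    MeasurableSet (Xq f τ₀ dstar q n) := by
  have h1 : MeasurableSet {x | ⌊τ₀ x⌋ = (n : ℤ)} :=
    (Int.measurable_floor.comp hτ₀) (measurableSet_singleton (n:ℤ))
  have h2 : MeasurableSet {x : X | ∃ j : ℕ, 1 ≤ j ∧ (j : ℝ) < dstar * Real.log n ∧
      (n : ℝ) ^ (1 - q) ≤ τ₀ (f^[j] x)} := by
    have : {x : X | ∃ j : ℕ, 1 ≤ j ∧ (j : ℝ) < dstar * Real.log n ∧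
        (n : ℝ) ^ (1 - q) ≤ τ₀ (f^[j] x)} =
        ⋃ j : ℕ, ⋃ (_ : 1 ≤ j ∧ (j : ℝ) < dstar * Real.log n),
          (fun x => τ₀ (f^[j] x)) ⁻¹' Set.Ici ((n:ℝ) ^ (1 - q)) := by
      ext x; simp [Set.mem_iUnion]; tauto
    rw [this]
    refine MeasurableSet.iUnion fun j => MeasurableSet.iUnion fun _ => ?_
    exact (hτ₀.comp (hf.iterate j)) measurableSet_Ici
  have : Xq f τ₀ dstar q n = {x | ⌊τ₀ x⌋ = (n : ℤ)} ∩ _ := rfl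
  exact h1.inter h2

/-- The key measure inequality coming from the set-theoretic inclusions. -/
lemma key_measure_ineq {X : Type*} [MeasurableSpace X] (μ : Measure X)
    (f : X → X) (hf : Measurable f) (τ₀ : X → ℝ) (hτ₀ : Measurable τ₀)
    (dstar q : ℝ) (hq1 : q ≤ 1) (n : ℕ) :
    μ (Xq f τ₀ dstar q n) + μ (XqPlus f τ₀ dstar q (n+1)) ≤
      μ (XqPlus f τ₀ dstar q n) + μ (XqPrime f τ₀ dstar q n) := by
  have hsub : Xq f τ₀ dstar q n ⊆ XqPlus f τ₀ dstar q n :=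
    fun x hx => ⟨le_of_eq hx.1.symm, hx.2⟩
  have hincl : XqPlus f τ₀ dstar q (n+1) ⊆
      (XqPlus f τ₀ dstar q n \ Xq f τ₀ dstar q n) ∪ XqPrime f τ₀ dstar q n := by
    rintro x ⟨hfl, j, hj1, hj2, hj3⟩
    have hcast : ((n+1 : ℕ) : ℝ) = (n : ℝ) + 1 := by push_cast; ring
    have hfl' : (n : ℤ) ≤ ⌊τ₀ x⌋ := le_trans (by exact_mod_cast Nat.le_succ n) hfl
    have hne : ⌊τ₀ x⌋ ≠ (n : ℤ) := by
      intro h; rw [h] at hfl; exact_mod_cast Nat.not_succ_le_self n (by exact_mod_cast hfl)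
    have hpow : (n : ℝ) ^ (1 - q) ≤ τ₀ (f^[j] x) := by
      refine le_trans ?_ hj3
      refine Real.rpow_le_rpow (Nat.cast_nonneg n) ?_ (by linarith)
      rw [hcast]; linarith
    have hj2' : (j : ℝ) < dstar * Real.log ((n : ℝ) + 1) := by rwa [hcast] at hj2
    rcases lt_or_ge (j : ℝ) (dstar * Real.log n) with h | h
    · exact Or.inl ⟨⟨hfl', j, hj1, h, hpow⟩, fun hc => hne hc.1⟩
    · exact Or.inr ⟨hfl', j, h, hj2', hpow⟩
  have heq : μ (Xq f τ₀ dstar q n) + μ (XqPlus f τ₀ dstar q n \ Xq f τ₀ dstar q n)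
      = μ (XqPlus f τ₀ dstar q n) := by
    have := measure_inter_add_diff (μ := μ) (XqPlus f τ₀ dstar q n)
      (measurable_Xq f hf τ₀ hτ₀ dstar q n)
    rwa [Set.inter_eq_self_of_subset_right hsub] at this
  calc μ (Xq f τ₀ dstar q n) + μ (XqPlus f τ₀ dstar q (n+1))
      ≤ μ (Xq f τ₀ dstar q n) +
        (μ (XqPlus f τ₀ dstar q n \ Xq f τ₀ dstar q n) + μ (XqPrime f τ₀ dstar q n)) := by
        gcongr
        exact le_trans (measure_mono hincl) (measure_union_le _ _)
  _ = μ (XqPlus f τ₀ dstar q n) + μ (XqPrime f τ₀ dstar q n) := by rw [← heq]; ring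

/-- Convergence of the "Abel summation" series. -/
lemma diff_sum_lt_top {b : ℕ → ℝ≥0∞} {C r t : ℝ} (hC : 0 < C) (hr : 0 < r) (hrt : r < t)
    (hb : ∀ n : ℕ, 1 ≤ n → b n ≤ ENNReal.ofReal (C * (n : ℝ) ^ (-t))) :
    (∑' m : ℕ, ENNReal.ofReal (((m+1 : ℕ) : ℝ) ^ r - ((m : ℕ) : ℝ) ^ r) * b (m+1)) < ⊤ := by
  set K : ℝ := 2 * r * C + C with hK
  have hterm : ∀ m : ℕ,
      ENNReal.ofReal (((m+1 : ℕ) : ℝ) ^ r - ((m : ℕ) : ℝ) ^ r) * b (m+1)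
        ≤ ENNReal.ofReal (K * ((m : ℝ) + 1) ^ (r - 1 - t)) := by
    intro m
    have hm1 : ((m+1 : ℕ) : ℝ) = (m : ℝ) + 1 := by push_cast; ring
    have hpos : (0:ℝ) < (m : ℝ) + 1 := by positivity
    have hnn : (0:ℝ) ≤ ((m+1 : ℕ) : ℝ) ^ r - ((m : ℕ) : ℝ) ^ r := by
      rw [hm1]
      have := Real.rpow_le_rpow (Nat.cast_nonneg m) (by linarith : (m:ℝ) ≤ (m:ℝ)+1) hr.le
      linarith
    calc ENNReal.ofReal (((m+1 : ℕ) : ℝ) ^ r - ((m : ℕ) : ℝ) ^ r) * b (m+1)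
        ≤ ENNReal.ofReal (((m+1 : ℕ) : ℝ) ^ r - ((m : ℕ) : ℝ) ^ r) *
            ENNReal.ofReal (C * ((m+1 : ℕ) : ℝ) ^ (-t)) := by
          gcongr
          exact hb (m+1) (Nat.le_add_left 1 m)
    _ = ENNReal.ofReal ((((m+1 : ℕ) : ℝ) ^ r - ((m : ℕ) : ℝ) ^ r) *
            (C * ((m+1 : ℕ) : ℝ) ^ (-t))) := (ENNReal.ofReal_mul hnn).symm
    _ ≤ ENNReal.ofReal (K * ((m : ℝ) + 1) ^ (r - 1 - t)) := by
          apply ENNReal.ofReal_le_ofReal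
          rw [hm1]
          rcases Nat.eq_zero_or_pos m with hm | hm
          · subst hm
            simp only [Nat.cast_zero, zero_add, Real.one_rpow, Real.zero_rpow hr.ne']
            nlinarith
          · have hm' : (1:ℝ) ≤ (m : ℝ) := by exact_mod_cast hm
            have h1 : ((m : ℝ) + 1) ^ r - (m : ℝ) ^ r ≤ 2 * r * ((m : ℝ) + 1) ^ (r - 1) :=
              mvt_rpow_bound hr hm'
            have h2 : (0:ℝ) ≤ C * ((m : ℝ) + 1) ^ (-t) := by positivity
            have h3 : ((m : ℝ) + 1) ^ (r - 1) * ((m : ℝ) + 1) ^ (-t)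
                = ((m : ℝ) + 1) ^ (r - 1 - t) := by
              rw [← Real.rpow_add hpos]; ring_nf
            have h4 : (0:ℝ) ≤ C * ((m : ℝ) + 1) ^ (r - 1 - t) := by positivity
            calc (((m : ℝ) + 1) ^ r - (m : ℝ) ^ r) * (C * ((m : ℝ) + 1) ^ (-t))
                ≤ (2 * r * ((m : ℝ) + 1) ^ (r - 1)) * (C * ((m : ℝ) + 1) ^ (-t)) :=
                  mul_le_mul_of_nonneg_right h1 h2
            _ = 2 * r * C * ((m : ℝ) + 1) ^ (r - 1 - t) := by
                  rw [← h3]; ring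
            _ ≤ K * ((m : ℝ) + 1) ^ (r - 1 - t) := by nlinarith [h4]
  have hsum : Summable (fun m : ℕ => K * ((m : ℝ) + 1) ^ (r - 1 - t)) := by
    have base : Summable (fun n : ℕ => (n : ℝ) ^ (r - 1 - t)) :=
      Real.summable_nat_rpow.mpr (by linarith)
    have shift : Summable (fun m : ℕ => ((m : ℝ) + 1) ^ (r - 1 - t)) := by
      refine (base.comp_injective (add_left_injective 1)).congr fun m => ?_
      simp [Function.comp]
    exact shift.mul_left K
  calc (∑' m : ℕ, ENNReal.ofReal (((m+1 : ℕ) : ℝ) ^ r - ((m : ℕ) : ℝ) ^ r) * b (m+1))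
      ≤ ∑' m : ℕ, ENNReal.ofReal (K * ((m : ℝ) + 1) ^ (r - 1 - t)) :=
        ENNReal.tsum_le_tsum hterm
  _ = ENNReal.ofReal (∑' m : ℕ, K * ((m : ℝ) + 1) ^ (r - 1 - t)) :=
        (ENNReal.ofReal_tsum_of_nonneg (fun m => by positivity) hsum).symm
  _ < ⊤ := ENNReal.ofReal_lt_top

/-- Convergence of the series over the sparsely-supported sequence. -/
lemma sparse_sum_lt_top {D : ℕ → ℝ≥0∞} {C r t dstar : ℝ} (hC : 0 < C) (hr : 0 < r)
    (hrt : r < t) (hd : 0 < dstar)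
    (hD : ∀ n : ℕ, 1 ≤ n → D n ≤ ENNReal.ofReal (C * (n : ℝ) ^ (-t)))
    (hsupp : ∀ n : ℕ, 1 ≤ n → D n ≠ 0 → ∃ j : ℕ, ⌊Real.exp (j / dstar)⌋₊ = n) :
    (∑' m : ℕ, ENNReal.ofReal (((m+1 : ℕ) : ℝ) ^ r) * D (m+1)) < ⊤ := by
  set s : ℝ := r - t with hs
  have hs0 : s < 0 := by simp only [hs]; linarith
  set θ : ℝ := Real.exp (s / dstar) with hθdef
  have hθ0 : 0 ≤ θ := (Real.exp_pos _).le
  have hθ1 : θ < 1 := by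
    rw [hθdef, Real.exp_lt_one_iff]
    exact div_neg_of_neg_of_pos hs0 hd
  set F : ℕ → ℝ≥0∞ := fun j => ENNReal.ofReal (C * 2 ^ (-s) * θ ^ j) with hF
  have step1 : ∀ m : ℕ, ENNReal.ofReal (((m+1 : ℕ) : ℝ) ^ r) * D (m+1)
      ≤ ∑' j : ℕ, (if m+1 = ⌊Real.exp (j / dstar)⌋₊ then F j else 0) := by
    intro m
    rcases eq_or_ne (D (m+1)) 0 with h0 | h0
    · simp [h0]
    · obtain ⟨j, hj⟩ := hsupp (m+1) (Nat.le_add_left 1 m) h0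
      have hx1 : (1:ℝ) ≤ Real.exp (j / dstar) := by
        apply Real.one_le_exp
        positivity
      have hfl : Real.exp (j / dstar) / 2 ≤ ((m+1 : ℕ) : ℝ) := by
        rw [← hj]; exact floor_ge_half hx1
      have hpos : (0:ℝ) < ((m+1 : ℕ) : ℝ) := by positivity
      have key : C * ((m+1 : ℕ) : ℝ) ^ s ≤ C * 2 ^ (-s) * θ ^ j := by
        have h1 : ((m+1 : ℕ) : ℝ) ^ s ≤ (Real.exp (j / dstar) / 2) ^ s :=
          Real.rpow_le_rpow_of_nonpos (by positivity) hfl hs0.le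
        have h2 : (Real.exp (j / dstar) / 2) ^ s
            = Real.exp (j / dstar) ^ s * 2 ^ (-s) := by
          rw [Real.div_rpow (Real.exp_pos _).le (by norm_num), div_eq_mul_inv,
            ← Real.rpow_neg (by norm_num : (0:ℝ) ≤ 2)]
        have h3 : Real.exp (j / dstar) ^ s = θ ^ j := by
          rw [hθdef, ← Real.exp_nat_mul,
            Real.rpow_def_of_pos (Real.exp_pos _), Real.log_exp]
          congr 1
          field_simp
        have h4 : ((m+1 : ℕ) : ℝ) ^ s ≤ 2 ^ (-s) * θ ^ j := by
          rw [mul_comm, ← h3, ← h2]; exact h1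
        calc C * ((m+1 : ℕ) : ℝ) ^ s ≤ C * (2 ^ (-s) * θ ^ j) :=
              mul_le_mul_of_nonneg_left h4 hC.le
        _ = C * 2 ^ (-s) * θ ^ j := by ring
      have hle : ENNReal.ofReal (((m+1 : ℕ) : ℝ) ^ r) * D (m+1) ≤ F j := by
        calc ENNReal.ofReal (((m+1 : ℕ) : ℝ) ^ r) * D (m+1)
            ≤ ENNReal.ofReal (((m+1 : ℕ) : ℝ) ^ r) *
              ENNReal.ofReal (C * ((m+1 : ℕ) : ℝ) ^ (-t)) := by
              gcongr; exact hD (m+1) (Nat.le_add_left 1 m)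
        _ = ENNReal.ofReal (C * ((m+1 : ℕ) : ℝ) ^ s) := by
              rw [← ENNReal.ofReal_mul (Real.rpow_nonneg hpos.le r)]
              congr 1
              rw [hs, show r - t = r + (-t) by ring, Real.rpow_add hpos]
              ring
        _ ≤ F j := ENNReal.ofReal_le_ofReal key
      calc ENNReal.ofReal (((m+1 : ℕ) : ℝ) ^ r) * D (m+1)
          = (if m+1 = ⌊Real.exp (j / dstar)⌋₊ then
              ENNReal.ofReal (((m+1 : ℕ) : ℝ) ^ r) * D (m+1) else 0) := by
            rw [if_pos hj.symm]
      _ ≤ (if m+1 = ⌊Real.exp (j / dstar)⌋₊ then F j else 0) := by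
            rw [if_pos hj.symm, if_pos hj.symm]; exact hle
      _ ≤ ∑' j : ℕ, (if m+1 = ⌊Real.exp (j / dstar)⌋₊ then F j else 0) :=
            ENNReal.le_tsum j
  have step3 : ∀ j : ℕ,
      (∑' m : ℕ, (if m+1 = ⌊Real.exp (j / dstar)⌋₊ then F j else 0)) ≤ F j := by
    intro j
    have hcomp : (fun m : ℕ => (if m+1 = ⌊Real.exp (j / dstar)⌋₊ then F j else 0))
        = (fun i : ℕ => (if i = ⌊Real.exp (j / dstar)⌋₊ then F j else 0)) ∘
          (fun m : ℕ => m + 1) := rfl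
    rw [hcomp]
    calc (∑' m : ℕ, ((fun i : ℕ => (if i = ⌊Real.exp (j / dstar)⌋₊ then F j else 0)) ∘
          (fun m : ℕ => m + 1)) m)
        ≤ ∑' i : ℕ, (if i = ⌊Real.exp (j / dstar)⌋₊ then F j else 0) :=
          ENNReal.tsum_comp_le_tsum_of_injective (add_left_injective 1) _
    _ = F j := tsum_ite_eq _ _
  have step4 : (∑' j : ℕ, F j) < ⊤ := by
    have hsum : Summable (fun j : ℕ => C * 2 ^ (-s) * θ ^ j) :=
      (summable_geometric_of_lt_one hθ0 hθ1).mul_left _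
    calc (∑' j : ℕ, F j)
        = ENNReal.ofReal (∑' j : ℕ, C * 2 ^ (-s) * θ ^ j) :=
          (ENNReal.ofReal_tsum_of_nonneg (fun j => by positivity) hsum).symm
    _ < ⊤ := ENNReal.ofReal_lt_top
  calc (∑' m : ℕ, ENNReal.ofReal (((m+1 : ℕ) : ℝ) ^ r) * D (m+1))
      ≤ ∑' m : ℕ, ∑' j : ℕ, (if m+1 = ⌊Real.exp (j / dstar)⌋₊ then F j else 0) :=
        ENNReal.tsum_le_tsum step1
  _ = ∑' j : ℕ, ∑' m : ℕ, (if m+1 = ⌊Real.exp (j / dstar)⌋₊ then F j else 0) :=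
        ENNReal.tsum_comm
  _ ≤ ∑' j : ℕ, F j := ENNReal.tsum_le_tsum step3
  _ < ⊤ := step4

end Auxiliary

theorem stmt19 {X : Type*} [MeasurableSpace X] (μ : Measure X) [IsFiniteMeasure μ]
    (f : X → X) (hf : Measurable f) (τ₀ : X → ℝ) (hτ₀ : Measurable τ₀)
    (dstar q : ℝ) (hdstar : 0 < dstar) (hq : q ∈ Set.Ioo (0:ℝ) 1)
    (C β p : ℝ) (hC : 0 < C) (hβ : 0 < β) (hp : p ∈ Set.Ioo (0:ℝ) 1)
    (hplus : ∀ n : ℕ, 1 ≤ n →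
      μ (XqPlus f τ₀ dstar q n) ≤ ENNReal.ofReal (C * (n : ℝ) ^ (-(β + p))))
    (hprime : ∀ n : ℕ, 1 ≤ n →
      μ (XqPrime f τ₀ dstar q n) ≤ ENNReal.ofReal (C * (n : ℝ) ^ (-(β + p)))) :
    ∀ β' ∈ Set.Ioo β (β + p),
      (∑' n : ℕ, ENNReal.ofReal ((n : ℝ) ^ β') * μ (Xq f τ₀ dstar q n)) < ⊤ := by
  intro β' hβ'
  obtain ⟨hb1, hb2⟩ := hβ'
  have hr : 0 < β' := lt_trans hβ hb1
  set a : ℕ → ℝ≥0∞ := fun n => μ (Xq f τ₀ dstar q n) with ha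
  set b : ℕ → ℝ≥0∞ := fun n => μ (XqPlus f τ₀ dstar q n) with hbdef
  set d : ℕ → ℝ≥0∞ := fun n => μ (XqPrime f τ₀ dstar q n) with hd
  set u : ℕ → ℝ≥0∞ := fun n => ENNReal.ofReal ((n:ℝ) ^ β') with hu
  set w : ℕ → ℝ≥0∞ :=
    fun m => ENNReal.ofReal (((m+1 : ℕ) : ℝ) ^ β' - ((m : ℕ) : ℝ) ^ β') with hw
  have hu0 : u 0 = 0 := by
    simp only [hu, Nat.cast_zero, Real.zero_rpow hr.ne', ENNReal.ofReal_zero]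
  -- finiteness of the two series
  have R1 : (∑' m : ℕ, w m * b (m+1)) < ⊤ := diff_sum_lt_top hC hr hb2 hplus
  have hsupp : ∀ n : ℕ, 1 ≤ n → d n ≠ 0 → ∃ j : ℕ, ⌊Real.exp (j / dstar)⌋₊ = n := by
    intro n hn hne
    obtain ⟨x, ⟨_, j, hj1, hj2, _⟩⟩ := nonempty_of_measure_ne_zero hne
    have hn' : (0:ℝ) < n := by exact_mod_cast hn
    refine ⟨j, (Nat.floor_eq_iff (by positivity)).mpr ⟨?_, ?_⟩⟩
    · have hlog : Real.log n ≤ (j:ℝ) / dstar := by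
        rw [le_div_iff₀ hdstar, mul_comm]; exact hj1
      calc (n:ℝ) = Real.exp (Real.log n) := (Real.exp_log hn').symm
      _ ≤ Real.exp ((j:ℝ) / dstar) := Real.exp_le_exp.mpr hlog
    · have hlog : (j:ℝ) / dstar < Real.log ((n:ℝ) + 1) := by
        rw [div_lt_iff₀ hdstar, mul_comm]; exact hj2
      calc Real.exp ((j:ℝ) / dstar) < Real.exp (Real.log ((n:ℝ) + 1)) :=
            Real.exp_lt_exp.mpr hlog
      _ = (n:ℝ) + 1 := Real.exp_log (by positivity)
  have R2 : (∑' m : ℕ, u (m+1) * d (m+1)) < ⊤ :=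
    sparse_sum_lt_top hC hr hb2 hdstar hprime hsupp
  set R : ℝ≥0∞ := (∑' m : ℕ, w m * b (m+1)) + ∑' m : ℕ, u (m+1) * d (m+1) with hR
  have hRfin : R < ⊤ := ENNReal.add_lt_top.mpr ⟨R1, R2⟩
  -- pointwise inequality
  have hpoint : ∀ m : ℕ, u (m+1) * a (m+1) + u (m+1) * b (m+2) ≤
      u m * b (m+1) + (w m * b (m+1) + u (m+1) * d (m+1)) := by
    intro m
    have hkey : a (m+1) + b (m+2) ≤ b (m+1) + d (m+1) :=
      key_measure_ineq μ f hf τ₀ hτ₀ dstar q hq.2.le (m+1)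
    have huw : u (m+1) ≤ u m + w m := by
      have hsplit : ((m+1 : ℕ) : ℝ) ^ β'
          = ((m : ℕ) : ℝ) ^ β' + (((m+1 : ℕ) : ℝ) ^ β' - ((m : ℕ) : ℝ) ^ β') := by ring
      calc u (m+1) = ENNReal.ofReal (((m+1 : ℕ) : ℝ) ^ β') := rfl
      _ ≤ u m + w m := by rw [hsplit]; exact ENNReal.ofReal_add_le
    calc u (m+1) * a (m+1) + u (m+1) * b (m+2)
        = u (m+1) * (a (m+1) + b (m+2)) := (mul_add _ _ _).symm
    _ ≤ u (m+1) * (b (m+1) + d (m+1)) := mul_le_mul_right hkey _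
    _ = u (m+1) * b (m+1) + u (m+1) * d (m+1) := mul_add _ _ _
    _ ≤ (u m + w m) * b (m+1) + u (m+1) * d (m+1) := by
        gcongr
    _ = u m * b (m+1) + (w m * b (m+1) + u (m+1) * d (m+1)) := by
        rw [add_mul]; ring
  -- partial sums are bounded by R
  have hTfin : ∀ N : ℕ, (∑ m ∈ Finset.range N, u m * b (m+1)) ≠ ⊤ := by
    intro N
    refine (ENNReal.sum_lt_top.mpr fun m _ => ?_).ne
    exact ENNReal.mul_lt_top ENNReal.ofReal_lt_top (measure_lt_top μ _)
  have claim : ∀ N : ℕ, (∑ m ∈ Finset.range N, u (m+1) * a (m+1)) ≤ R := by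
    intro N
    have hsum := Finset.sum_le_sum (fun m (_ : m ∈ Finset.range N) => hpoint m)
    rw [Finset.sum_add_distrib, Finset.sum_add_distrib, Finset.sum_add_distrib] at hsum
    have hshift : (∑ m ∈ Finset.range N, u (m+1) * b (m+2))
        = ∑ m ∈ Finset.range (N+1), u m * b (m+1) := by
      rw [Finset.sum_range_succ' (fun m => u m * b (m+1)) N]
      simp [hu0]
    have hmono : (∑ m ∈ Finset.range N, u m * b (m+1))
        ≤ ∑ m ∈ Finset.range (N+1), u m * b (m+1) :=
      Finset.sum_le_sum_of_subset (Finset.range_subset_range.mpr (Nat.le_succ N))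
    have hRN : (∑ m ∈ Finset.range N, w m * b (m+1)) +
        (∑ m ∈ Finset.range N, u (m+1) * d (m+1)) ≤ R :=
      add_le_add (ENNReal.sum_le_tsum _) (ENNReal.sum_le_tsum _)
    have hfinal : (∑ m ∈ Finset.range N, u (m+1) * a (m+1)) +
        (∑ m ∈ Finset.range (N+1), u m * b (m+1)) ≤
        R + (∑ m ∈ Finset.range (N+1), u m * b (m+1)) := by
      calc (∑ m ∈ Finset.range N, u (m+1) * a (m+1)) +
          (∑ m ∈ Finset.range (N+1), u m * b (m+1))
          = (∑ m ∈ Finset.range N, u (m+1) * a (m+1)) +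
            (∑ m ∈ Finset.range N, u (m+1) * b (m+2)) := by rw [hshift]
      _ ≤ (∑ m ∈ Finset.range N, u m * b (m+1)) +
            ((∑ m ∈ Finset.range N, w m * b (m+1)) +
              (∑ m ∈ Finset.range N, u (m+1) * d (m+1))) := hsum
      _ ≤ (∑ m ∈ Finset.range (N+1), u m * b (m+1)) + R := add_le_add hmono hRN
      _ = R + (∑ m ∈ Finset.range (N+1), u m * b (m+1)) := add_comm _ _
    exact (WithTop.add_le_add_iff_right (hTfin (N+1))).mp hfinal
  -- conclude
  calc (∑' n : ℕ, ENNReal.ofReal ((n : ℝ) ^ β') * μ (Xq f τ₀ dstar q n))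
      = ⨆ s : Finset ℕ, ∑ n ∈ s, u n * a n := ENNReal.tsum_eq_iSup_sum
  _ ≤ R := by
      refine iSup_le fun s => ?_
      have hsub : s ⊆ Finset.range (s.sup id + 1) := by
        intro n hn
        exact Finset.mem_range.mpr (Nat.lt_succ_of_le (Finset.le_sup (f := id) hn))
      calc (∑ n ∈ s, u n * a n) ≤ ∑ n ∈ Finset.range (s.sup id + 1), u n * a n :=
            Finset.sum_le_sum_of_subset hsub
      _ = ∑ m ∈ Finset.range (s.sup id), u (m+1) * a (m+1) := by
            rw [Finset.sum_range_succ' (fun n => u n * a n) (s.sup id)]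
            simp [hu0]
      _ ≤ R := claim _
  _ < ⊤ := hRfin
end
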